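/- arXiv:2301.13548 — 12 statements merged into one kernel-verified Lean document; each statement's English description precedes it below -/
import Mathlib

section
/- Brauer's theorem: Let A be an n×n complex matrix with eigenvalues λ₁,…,λₙ (with multiplicity) and let x₁ be an eigenvector of A for λ₁. Then for any vector c ∈ ℂⁿ, the matrix = A + x₁cᵀ has eigenvalues λ₁ + cᵀx₁, λ₂, …, λₙ. -/
/-!
Over `R[X]`, an eigenvector `x` of `A` for `μ` is an eigenvector of `charmatrix A` for `X - μ`.
Once `charpoly A` is inverted (harmless: it is monic, hence a non-zero-divisor), the matrix
determinant lemma gives `det (M - u vᵀ) = det M * (1 - vᵀ M⁻¹ u)` with `M⁻¹ u = u / (X - μ)`, so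
`(X - μ) * charpoly (A + x cᵀ) = (X - μ - cᵀ x) * charpoly A`. Cancelling the monic factor
`X - λ₁` of `charpoly A = (X - λ₁) * ∏_{i ≠ 1} (X - λᵢ)` gives the theorem.
-/

open Polynomial Matrix

namespace Matrix

variable {m R : Type*} [CommRing R]

theorem map_vecMulVec {S : Type*} [CommRing S] (f : R →+* S) (u v : m → R) :
    (vecMulVec u v).map f = vecMulVec (f ∘ u) (f ∘ v) := by
  ext i j
  simp [vecMulVec_apply]

variable [Fintype m] [DecidableEq m]

theorem mul_det_sub_vecMulVec_of_mulVec_eq_smul {M : Matrix m m R} (hM : IsUnit M.det)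
    {u : m → R} {a : R} (hu : M *ᵥ u = a • u) (v : m → R) :
    a * (M - vecMulVec u v).det = (a - v ⬝ᵥ u) * M.det := by
  have hinv : a • (M⁻¹ *ᵥ u) = u := by
    rw [← mulVec_smul, ← hu, mulVec_mulVec, nonsing_inv_mul _ hM, one_mulVec]
  rw [sub_eq_add_neg, ← neg_vecMulVec, vecMulVec_eq Unit, det_add_replicateCol_mul_replicateRow hM,
    det_unique (1 + replicateRow Unit v * M⁻¹ * replicateCol Unit (-u)), add_apply, one_apply_eq,
    ← replicateRow_vecMul, replicateRow_mul_replicateCol_apply, dotProduct_neg,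
    ← dotProduct_mulVec]
  conv_rhs => rw [← hinv, dotProduct_smul, smul_eq_mul]
  ring

theorem charmatrix_add (A B : Matrix m m R) : charmatrix (A + B) = charmatrix A - B.map C := by
  simp only [charmatrix, map_add, RingHom.mapMatrix_apply]
  abel

theorem charmatrix_mulVec_of_mulVec_eq_smul {A : Matrix m m R} {x : m → R} {μ : R}
    (hx : A *ᵥ x = μ • x) : charmatrix A *ᵥ (C ∘ x) = (X - C μ) • (C ∘ x) := by
  have hC : A.map C *ᵥ (C ∘ x) = C ∘ (A *ᵥ x) :=
    funext fun i => (RingHom.map_mulVec C A x i).symm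
  rw [charmatrix, sub_mulVec, RingHom.mapMatrix_apply, hC, hx]
  ext i
  simp [scalar_apply, sub_mul]

theorem mul_charpoly_add_vecMulVec_of_mulVec_eq_smul {A : Matrix m m R} {x : m → R} {μ : R}
    (hx : A *ᵥ x = μ • x) (c : m → R) :
    (X - C μ) * (A + vecMulVec x c).charpoly = (X - C (μ + c ⬝ᵥ x)) * A.charpoly := by
  let f := algebraMap R[X] (Localization.Away A.charpoly)
  have hf : Function.Injective f := IsLocalization.injective _
    (Submonoid.powers_le.mpr A.charpoly_monic.mem_nonZeroDivisors)
  have hunit : IsUnit ((charmatrix A).map f).det := by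
    rw [← RingHom.mapMatrix_apply, ← RingHom.map_det]
    exact IsLocalization.Away.algebraMap_isUnit A.charpoly
  have heig : (charmatrix A).map f *ᵥ (f ∘ C ∘ x) = f (X - C μ) • (f ∘ C ∘ x) := by
    ext i
    rw [← RingHom.map_mulVec, charmatrix_mulVec_of_mulVec_eq_smul hx]
    simp
  have key := mul_det_sub_vecMulVec_of_mulVec_eq_smul hunit heig (f ∘ C ∘ c)
  rw [← map_vecMulVec f (C ∘ x), ← map_vecMulVec C x c, ← RingHom.map_dotProduct] at key
  simp only [← RingHom.mapMatrix_apply, ← map_sub, ← RingHom.map_det, ← map_mul] at key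
  rw [RingHom.mapMatrix_apply, ← charmatrix_add, ← RingHom.map_dotProduct] at key
  apply hf
  rwa [C_add, ← sub_sub]

end Matrix

theorem brauer_general (n : ℕ) (A : Matrix (Fin (n + 1)) (Fin (n + 1)) ℂ) (lam : Fin (n + 1) → ℂ)
    (hchar : A.charpoly = ∏ i, (X - C (lam i)))
    (x c : Fin (n + 1) → ℂ) (hev : A.mulVec x = lam 0 • x) :
    (A + Matrix.vecMulVec x c).charpoly
      = (X - C (lam 0 + c ⬝ᵥ x)) * ∏ i ∈ Finset.univ.erase 0, (X - C (lam i)) := by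
  have hsplit : A.charpoly = (X - C (lam 0)) * ∏ i ∈ Finset.univ.erase 0, (X - C (lam i)) := by
    rw [hchar, Finset.mul_prod_erase _ (fun i => X - C (lam i)) (Finset.mem_univ 0)]
  have h := mul_charpoly_add_vecMulVec_of_mulVec_eq_smul hev c
  rw [hsplit, mul_left_comm] at h
  exact (monic_X_sub_C (lam 0)).isRegular.left h

/-- **Brauer's theorem.** If `A` has characteristic polynomial `∏ (z - λᵢ)` and
`x` is an eigenvector for `λ₀`, then `A + x cᵀ` has characteristic polynomial
`(z - (λ₀ + cᵀx)) ∏_{i ≠ 0} (z - λᵢ)`. -/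
theorem brauer (n : ℕ) (A : Matrix (Fin (n + 1)) (Fin (n + 1)) ℂ) (lam : Fin (n + 1) → ℂ)
    (hchar : A.charpoly = ∏ i, (X - C (lam i)))
    (x c : Fin (n + 1) → ℂ) (hx : x ≠ 0) (hev : A.mulVec x = lam 0 • x) :
    (A + Matrix.vecMulVec x c).charpoly
      = (X - C (lam 0 + c ⬝ᵥ x)) * ∏ i ∈ Finset.univ.erase 0, (X - C (lam i)) :=
  brauer_general n A lam hchar x c hev
end

section
/- Rado's theorem: Let A be an n×n complex matrix with eigenvalues λ₁,…,λₙ, and let x₁,…,x_k be linearly independent eigenvectors for λ₁,…,λ_k; set X = [x₁ ⋯ x_k]. Then for any C ∈ M_{n×k}(ℂ), the matrix = A + XCᵀ has eigenvalues μ₁,…,μ_k, λ_{k+1},…,λₙ, where μ₁,…,μ_k are the eigenvalues of Ω = diag(λ₁,…,λ_k) + CᵀX. -/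
/-!
For `t` outside the spectra of `A` and `Λ = diag(λ₁, …, λ_k)`, the intertwining `A X = X Λ`
gives `(t - A)⁻¹ X = X (t - Λ)⁻¹`, so the Weinstein–Aronszajn identity yields
`det (t - A - X Cᵀ) = det (t - A) · det (1 - Cᵀ X (t - Λ)⁻¹) = det (t - A) · det (t - Ω) / det (t - Λ)`.
Hence `χ(A + X Cᵀ) · χ(Λ) = χ(A) · χ(Ω)` as polynomials, and cancelling
`χ(Λ) = ∏_{j < k} (X - λⱼ)` from `χ(A) = ∏ᵢ (X - λᵢ)` gives the theorem.
-/

open Polynomial Matrix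

namespace Matrix

variable {m p R : Type*} [Fintype m] [Fintype p] [DecidableEq m] [DecidableEq p]

theorem det_sub_mul_mul_det_of_mul_eq_mul [CommRing R] {B : Matrix m m R} {D : Matrix p p R}
    {X : Matrix m p R} (C : Matrix p m R) (hB : IsUnit B.det) (hD : IsUnit D.det)
    (hBX : B * X = X * D) : (B - X * C).det * D.det = B.det * (D - C * X).det := by
  have hinv : B⁻¹ * X = X * D⁻¹ := calc
    B⁻¹ * X = B⁻¹ * (X * D * D⁻¹) := by rw [mul_nonsing_inv_cancel_right D X hD]
    _ = X * D⁻¹ := by rw [← hBX, Matrix.mul_assoc, nonsing_inv_mul_cancel_left B _ hB]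
  calc (B - X * C).det * D.det = B.det * ((1 - C * X * D⁻¹) * D).det := by
        rw [sub_eq_add_neg, ← Matrix.mul_neg, det_add_mul X (-C) hB, Matrix.mul_assoc, hinv,
          det_mul, Matrix.neg_mul, ← sub_eq_add_neg, Matrix.mul_assoc, mul_assoc]
    _ = B.det * (D - C * X).det := by
        rw [Matrix.sub_mul, Matrix.one_mul, nonsing_inv_mul_cancel_right D _ hD]

theorem charpoly_add_mul_mul_charpoly_of_mul_eq_mul [Field R] [Infinite R] {A : Matrix m m R}
    {Λ : Matrix p p R} {X : Matrix m p R} (C : Matrix p m R) (hAX : A * X = X * Λ) :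
    (A + X * C).charpoly * Λ.charpoly = A.charpoly * (Λ + C * X).charpoly := by
  refine eq_of_infinite_eval_eq _ _ (Set.Infinite.mono (fun t ht => ?_)
    (finite_setOfPred_isRoot (A.charpoly_monic.mul Λ.charpoly_monic).ne_zero).infinite_compl)
  have hne : A.charpoly.eval t ≠ 0 ∧ Λ.charpoly.eval t ≠ 0 := by
    simpa [IsRoot, not_or] using ht
  simp only [Set.mem_ofPred_eq, eval_mul, eval_charpoly] at hne ⊢
  rw [← sub_sub, ← sub_sub]
  refine det_sub_mul_mul_det_of_mul_eq_mul C hne.1.isUnit hne.2.isUnit ?_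
  rw [Matrix.sub_mul, Matrix.mul_sub, hAX, scalar_apply, scalar_apply, ← smul_eq_diagonal_mul,
    ← smul_eq_mul_diagonal]

end Matrix

theorem Fin.prod_univ_eq_prod_castLE_mul_prod_filter_le {M : Type*} [CommMonoid M] {k n : ℕ}
    (hk : k ≤ n) (f : Fin n → M) :
    ∏ i, f i = (∏ j : Fin k, f (Fin.castLE hk j)) *
      ∏ i ∈ Finset.univ.filter (fun i : Fin n => k ≤ (i : ℕ)), f i := by
  rw [← Finset.prod_filter_mul_prod_filter_not Finset.univ (fun i : Fin n => (i : ℕ) < k)]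
  simp only [not_lt]
  congr 1
  calc _ = ∏ i ∈ Finset.univ.map (Fin.castLEEmb hk), f i := by
        congr 1
        ext i
        simpa [Fin.castLEEmb] using ⟨fun h => ⟨⟨i, h⟩, rfl⟩, by rintro ⟨a, rfl⟩; exact a.isLt⟩
    _ = _ := Finset.prod_map _ _ _

theorem rado_general (n k : ℕ) (hk : k ≤ n) (A : Matrix (Fin n) (Fin n) ℂ) (lam : Fin n → ℂ)
    (hchar : A.charpoly = ∏ i, (X - C (lam i)))
    (Xm : Matrix (Fin n) (Fin k) ℂ)
    (hev : ∀ j : Fin k,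
      A.mulVec (fun i => Xm i j) = lam (Fin.castLE hk j) • (fun i => Xm i j))
    (Cm : Matrix (Fin n) (Fin k) ℂ) :
    (A + Xm * Cmᵀ).charpoly
      = (Matrix.diagonal (fun j : Fin k => lam (Fin.castLE hk j)) + Cmᵀ * Xm).charpoly
        * ∏ i ∈ Finset.univ.filter (fun i : Fin n => k ≤ (i : ℕ)), (X - C (lam i)) := by
  set Λ := Matrix.diagonal (fun j : Fin k => lam (Fin.castLE hk j))
  have hAX : A * Xm = Xm * Λ := by
    ext i j
    rw [mul_diagonal]
    simpa [mulVec, dotProduct, mul_apply, mul_comm] using congrFun (hev j) i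
  have hcharpoly := charpoly_add_mul_mul_charpoly_of_mul_eq_mul Cmᵀ hAX
  rw [hchar, Fin.prod_univ_eq_prod_castLE_mul_prod_filter_le hk, ← charpoly_diagonal] at hcharpoly
  exact mul_right_cancel₀ Λ.charpoly_monic.ne_zero (hcharpoly.trans (by ring))

/-- **Rado's theorem.** If `A` has eigenvalues `λ₁, …, λₙ` (with multiplicity) and
`x₁, …, x_k` are linearly independent eigenvectors for `λ₁, …, λ_k` forming the
columns of `Xm`, then for any `n × k` matrix `Cm`, the matrix `A + Xm Cmᵀ` has
eigenvalues `μ₁, …, μ_k, λ_{k+1}, …, λₙ` where the `μⱼ` are the eigenvalues of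
`Ω = diag(λ₁,…,λ_k) + Cmᵀ Xm`. -/
theorem rado (n k : ℕ) (hk : k ≤ n) (A : Matrix (Fin n) (Fin n) ℂ) (lam : Fin n → ℂ)
    (hchar : A.charpoly = ∏ i, (X - C (lam i)))
    (Xm : Matrix (Fin n) (Fin k) ℂ)
    (hli : LinearIndependent ℂ (fun j : Fin k => fun i : Fin n => Xm i j))
    (hev : ∀ j : Fin k,
      A.mulVec (fun i => Xm i j) = lam (Fin.castLE hk j) • (fun i => Xm i j))
    (Cm : Matrix (Fin n) (Fin k) ℂ) :
    (A + Xm * Cmᵀ).charpoly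
      = (Matrix.diagonal (fun j : Fin k => lam (Fin.castLE hk j)) + Cmᵀ * Xm).charpoly
        * ∏ i ∈ Finset.univ.filter (fun i : Fin n => k ≤ (i : ℕ)), (X - C (lam i)) :=
  rado_general n k hk A lam hchar Xm hev Cm
end

section
/- Let S be a 2n×2n symplectic matrix with eigenvectors x₁, x₂ for eigenvalues λ₁ and λ₁⁻¹ respectively, normalized so that XᵀJX = J₂ for X = [x₁ x₂]. Then the matrix Ŝ = S + XRXᵀJᵀS is symplectic if and only if the entries of R = [r_{ij}] ∈ M₂(ℂ) satisfy r₁₂ − r₂₁ + r₁₁r₂₂ − r₁₂r₂₁ = 0. -/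
/-!
Since `Ŝ = (1 + X R Xᵀ Jᵀ) S` and `S` is symplectic (hence invertible), `Ŝ` is symplectic iff
`1 + X R Xᵀ Jᵀ` is. Expanding with `Jᵀ = -J` and `Xᵀ J X = J₂`, the defect of the latter is
`J X M Xᵀ J` with `M = Rᵀ - R - Rᵀ J₂ R`; sandwiching by `Xᵀ` and `X` turns it into `J₂ M J₂`, so
it vanishes iff `M` does. Finally `M` is skew with off-diagonal entry
`r₁₂ - r₂₁ + r₁₁ r₂₂ - r₁₂ r₂₁` (up to sign).
-/

open Matrix

namespace Matrix

variable {ι m R : Type*} [Fintype ι] [Fintype m] [CommRing R]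

theorem transpose_mul_mul_mul_right_eq_iff [DecidableEq ι] {J S : Matrix ι ι R} (hS : IsUnit S)
    (hSJ : Sᵀ * J * S = J) (A : Matrix ι ι R) :
    (A * S)ᵀ * J * (A * S) = J ↔ Aᵀ * J * A = J := by
  have hconj : (A * S)ᵀ * J * (A * S) = Sᵀ * (Aᵀ * J * A) * S := by
    simp only [transpose_mul, Matrix.mul_assoc]
  rw [hconj]
  refine ⟨fun h => ?_, fun h => by rw [h, hSJ]⟩
  exact (isUnit_transpose S |>.2 hS).mul_left_cancel (hS.mul_right_cancel (h.trans hSJ.symm))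

theorem transpose_one_add_mul_mul_eq [DecidableEq ι] {J : Matrix ι ι R} (hJ : Jᵀ = -J)
    (X : Matrix ι m R) (R' : Matrix m m R) :
    (1 + X * R' * Xᵀ * Jᵀ)ᵀ * J * (1 + X * R' * Xᵀ * Jᵀ) =
      J + J * X * (R'ᵀ - R' - R'ᵀ * (Xᵀ * J * X) * R') * Xᵀ * J := by
  simp only [transpose_add, transpose_one, transpose_mul, transpose_transpose, transpose_neg, hJ,
    neg_neg]
  simp only [Matrix.add_mul, Matrix.mul_add, Matrix.sub_mul, Matrix.mul_sub,
    Matrix.mul_neg, Matrix.one_mul, Matrix.mul_one, Matrix.mul_assoc]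
  abel

theorem mul_mul_mul_transpose_mul_eq_zero_iff {J : Matrix ι ι R} {X : Matrix ι m R}
    [DecidableEq m] (hX : IsUnit (Xᵀ * J * X)) (M : Matrix m m R) :
    J * X * M * Xᵀ * J = 0 ↔ M = 0 := by
  refine ⟨fun h => ?_, fun h => by rw [h, Matrix.mul_zero, Matrix.zero_mul, Matrix.zero_mul]⟩
  have hsandwich : (Xᵀ * J * X) * M * (Xᵀ * J * X) = (Xᵀ * J * X) * 0 * (Xᵀ * J * X) := by
    calc (Xᵀ * J * X) * M * (Xᵀ * J * X) = Xᵀ * (J * X * M * Xᵀ * J) * X := by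
          simp only [Matrix.mul_assoc]
      _ = (Xᵀ * J * X) * 0 * (Xᵀ * J * X) := by
          rw [h, Matrix.mul_zero, Matrix.mul_zero, Matrix.zero_mul, Matrix.zero_mul]
  exact hX.mul_left_cancel (hX.mul_right_cancel hsandwich)

theorem fin_two_transpose_sub_sub_transpose_mul_mul_eq (A : Matrix (Fin 2) (Fin 2) R) :
    Aᵀ - A - Aᵀ * !![0, 1; -1, 0] * A =
      !![0, -(A 0 1 - A 1 0 + A 0 0 * A 1 1 - A 0 1 * A 1 0);
        A 0 1 - A 1 0 + A 0 0 * A 1 1 - A 0 1 * A 1 0, 0] := by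
  ext i j
  fin_cases i <;> fin_cases j <;> simp [Matrix.mul_apply, Fin.sum_univ_two] <;> ring

end Matrix

theorem symplectic_update_iff_general (n : ℕ)
    (J : Matrix (Fin n ⊕ Fin n) (Fin n ⊕ Fin n) ℂ)
    (hJ : J = Matrix.fromBlocks 0 1 (-1) 0)
    (S : Matrix (Fin n ⊕ Fin n) (Fin n ⊕ Fin n) ℂ)
    (hS : Sᵀ * J * S = J)
    (Xm : Matrix (Fin n ⊕ Fin n) (Fin 2) ℂ)
    (hnorm : Xmᵀ * J * Xm = !![0, 1; -1, 0])
    (R : Matrix (Fin 2) (Fin 2) ℂ) :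
    ((S + Xm * R * Xmᵀ * Jᵀ * S)ᵀ * J * (S + Xm * R * Xmᵀ * Jᵀ * S) = J) ↔
      R 0 1 - R 1 0 + R 0 0 * R 1 1 - R 0 1 * R 1 0 = 0 := by
  -- Mathlib's `Matrix.J` has the opposite sign convention.
  have hJ' : J = -Matrix.J (Fin n) ℂ := by
    rw [hJ, Matrix.J, fromBlocks_neg]
    simp
  have hSsymp : S ∈ symplecticGroup (Fin n) ℂ :=
    SymplecticGroup.mem_iff'.2 (by simpa [hJ'] using hS)
  have hSunit : IsUnit S :=
    (Matrix.isUnit_iff_isUnit_det S).2 (SymplecticGroup.symplectic_det hSsymp)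
  have hJskew : Jᵀ = -J := by rw [hJ', transpose_neg, J_transpose]
  have hXunit : IsUnit (Xmᵀ * J * Xm) := by
    rw [hnorm, Matrix.isUnit_iff_isUnit_det, det_fin_two_of]
    simp
  rw [show S + Xm * R * Xmᵀ * Jᵀ * S = (1 + Xm * R * Xmᵀ * Jᵀ) * S by
      rw [Matrix.add_mul, Matrix.one_mul],
    transpose_mul_mul_mul_right_eq_iff hSunit hS, transpose_one_add_mul_mul_eq hJskew,
    add_eq_left, mul_mul_mul_transpose_mul_eq_zero_iff hXunit, hnorm,
    fin_two_transpose_sub_sub_transpose_mul_mul_eq]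
  simp [← Matrix.ext_iff, Fin.forall_fin_two, -neg_sub]

/-- With `X = [x₁ x₂]` eigenvectors of the symplectic matrix `S` for `λ₁, λ₁⁻¹`
normalized so that `Xᵀ J X = J₂`, the matrix `Ŝ = S + X R Xᵀ Jᵀ S` is symplectic
iff `r₁₂ - r₂₁ + r₁₁ r₂₂ - r₁₂ r₂₁ = 0`. -/
theorem symplectic_update_iff (n : ℕ)
    (J : Matrix (Fin n ⊕ Fin n) (Fin n ⊕ Fin n) ℂ)
    (hJ : J = Matrix.fromBlocks 0 1 (-1) 0)
    (S : Matrix (Fin n ⊕ Fin n) (Fin n ⊕ Fin n) ℂ)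
    (hS : Sᵀ * J * S = J)
    (lam1 : ℂ) (x1 x2 : Fin n ⊕ Fin n → ℂ)
    (h1 : S.mulVec x1 = lam1 • x1) (h2 : S.mulVec x2 = lam1⁻¹ • x2)
    (Xm : Matrix (Fin n ⊕ Fin n) (Fin 2) ℂ)
    (hXm : Xm = Matrix.of fun i j => if j = 0 then x1 i else x2 i)
    (hnorm : Xmᵀ * J * Xm = !![0, 1; -1, 0])
    (R : Matrix (Fin 2) (Fin 2) ℂ) :
    ((S + Xm * R * Xmᵀ * Jᵀ * S)ᵀ * J * (S + Xm * R * Xmᵀ * Jᵀ * S) = J) ↔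
      R 0 1 - R 1 0 + R 0 0 * R 1 1 - R 0 1 * R 1 0 = 0 :=
  symplectic_update_iff_general n J hJ S hS Xm hnorm R
end

section
/- Let S be a 2n×2n symplectic matrix with eigenvectors x₁, x₂ for λ₁ and λ₁⁻¹ normalized so XᵀJX = J₂, X = [x₁ x₂], and let d = (μ + μ⁻¹) − (λ₁ + λ₁⁻¹) for μ ≠ 0. If R = [r_{ij}] ∈ M₂(ℂ) satisfies λ₁r₁₂ − λ₁⁻¹r₂₁ = d and r₁₂ − r₂₁ + r₁₁r₂₂ − r₁₂r₂₁ = 0, then Ŝ = S + XRXᵀJᵀS is symplectic and its characteristic polynomial equals that of S multiplied by (z−μ)(z−μ⁻¹)/((z−λ₁)(z−λ₁⁻¹)). -/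
open Matrix Polynomial

lemma aux_sympl {m' : Type*} [Fintype m'] [DecidableEq m']
    (J S E : Matrix m' m' ℂ) (hS : Sᵀ * J * S = J) (hcond : Eᵀ * J + J * E = Eᵀ * J * E) :
    (S - E * S)ᵀ * J * (S - E * S) = J := by
  have h : (S - E * S)ᵀ * J * (S - E * S)
      = Sᵀ * J * S - Sᵀ * (Eᵀ * J + J * E - Eᵀ * J * E) * S := by
    rw [transpose_sub, transpose_mul]; noncomm_ring
  rw [h, hcond, sub_self, Matrix.mul_zero, Matrix.zero_mul, sub_zero, hS]

lemma aux_det_swap {m' : Type*} [Fintype m'] [DecidableEq m'] {α : Type*} [CommRing α]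
    (A : Matrix m' m' α) (B : Matrix m' (Fin 2) α) (Cm : Matrix (Fin 2) m' α)
    (W : Matrix (Fin 2) (Fin 2) α) (h : A * B = B * W) :
    (A - B * Cm).det * W.det = A.det * (W - Cm * B).det := by
  have hPQ : (fromBlocks A B Cm (1 : Matrix (Fin 2) (Fin 2) α)) * (fromBlocks 1 B 0 (-W)) =
      fromBlocks A 0 Cm (Cm * B - W) := by
    rw [fromBlocks_multiply]
    simp only [Matrix.mul_one, Matrix.mul_zero, add_zero, h, Matrix.mul_neg, add_neg_cancel,
      Matrix.one_mul, ← sub_eq_add_neg]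
  have hd := congrArg Matrix.det hPQ
  rw [det_mul, det_fromBlocks_one₂₂, det_fromBlocks_zero₂₁, det_fromBlocks_zero₁₂,
    det_one, one_mul] at hd
  have h1 : (-W).det = W.det := by rw [det_neg]; simp
  have h2 : (Cm * B - W).det = (W - Cm * B).det := by rw [← neg_sub, det_neg]; simp
  rw [h1] at hd
  rw [hd, h2]

/-- Structure-preserving Rado theorem for symplectic matrices: if the entries of `R`
satisfy `λ₁ r₁₂ - λ₁⁻¹ r₂₁ = d` and `r₁₂ - r₂₁ + r₁₁ r₂₂ - r₁₂ r₂₁ = 0`, then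
`Ŝ = S + X R Xᵀ Jᵀ S` is symplectic and its characteristic polynomial equals that of
`S` with the factor `(z-λ₁)(z-λ₁⁻¹)` replaced by `(z-μ)(z-μ⁻¹)`. -/
theorem symplectic_rado (n : ℕ)
    (J : Matrix (Fin n ⊕ Fin n) (Fin n ⊕ Fin n) ℂ)
    (hJ : J = Matrix.fromBlocks 0 1 (-1) 0)
    (S : Matrix (Fin n ⊕ Fin n) (Fin n ⊕ Fin n) ℂ)
    (hS : Sᵀ * J * S = J)
    (lam1 mu : ℂ) (hlam1 : lam1 ≠ 0) (hmu : mu ≠ 0)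
    (hroot1 : S.charpoly.IsRoot lam1) (hroot2 : S.charpoly.IsRoot lam1⁻¹)
    (x1 x2 : Fin n ⊕ Fin n → ℂ)
    (h1 : S.mulVec x1 = lam1 • x1) (h2 : S.mulVec x2 = lam1⁻¹ • x2)
    (Xm : Matrix (Fin n ⊕ Fin n) (Fin 2) ℂ)
    (hXm : Xm = Matrix.of fun i j => if j = 0 then x1 i else x2 i)
    (hnorm : Xmᵀ * J * Xm = !![0, 1; -1, 0])
    (R : Matrix (Fin 2) (Fin 2) ℂ)
    (hR1 : lam1 * R 0 1 - lam1⁻¹ * R 1 0 = (mu + mu⁻¹) - (lam1 + lam1⁻¹))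
    (hR2 : R 0 1 - R 1 0 + R 0 0 * R 1 1 - R 0 1 * R 1 0 = 0) :
    ((S + Xm * R * Xmᵀ * Jᵀ * S)ᵀ * J * (S + Xm * R * Xmᵀ * Jᵀ * S) = J) ∧
      (S + Xm * R * Xmᵀ * Jᵀ * S).charpoly * ((X - C lam1) * (X - C lam1⁻¹))
        = S.charpoly * ((X - C mu) * (X - C mu⁻¹)) := by
  have hJT : Jᵀ = -J := by
    subst hJ
    ext i j
    rcases i with i | i <;> rcases j with j | j <;>
      simp [fromBlocks, transpose_apply, Matrix.one_apply, eq_comm]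
  set J2 : Matrix (Fin 2) (Fin 2) ℂ := !![0, 1; -1, 0] with hJ2
  -- key 2x2 identity from hR2
  have hRkey : Rᵀ * J2 * R = Rᵀ - R := by
    ext i j
    fin_cases i <;> fin_cases j <;>
      simp [hJ2, Matrix.mul_apply, Fin.sum_univ_two, transpose_apply] <;>
      first
        | linear_combination hR2
        | linear_combination -hR2
        | linear_combination 2 * hR2
        | linear_combination -2 * hR2
        | ring
  -- rewrite the hat matrix as S - E * S
  have hhat : S + Xm * R * Xmᵀ * Jᵀ * S = S - (Xm * R * Xmᵀ * J) * S := by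
    rw [hJT]; noncomm_ring
  constructor
  · rw [hhat]
    refine aux_sympl J S (Xm * R * Xmᵀ * J) hS ?_
    have hEt : (Xm * R * Xmᵀ * J)ᵀ = -(J * (Xm * (Rᵀ * Xmᵀ))) := by
      simp only [transpose_mul, transpose_transpose, hJT, Matrix.neg_mul, Matrix.mul_assoc]
    have e1 : (Xm * R * Xmᵀ * J)ᵀ * J + J * (Xm * R * Xmᵀ * J)
        = -(J * (Xm * ((Rᵀ - R) * (Xmᵀ * J)))) := by
      rw [hEt]
      simp only [Matrix.sub_mul, Matrix.mul_sub, Matrix.mul_neg, Matrix.neg_mul,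
        Matrix.mul_assoc]
      abel
    have e2 : (Xm * R * Xmᵀ * J)ᵀ * J * (Xm * R * Xmᵀ * J)
        = -(J * (Xm * ((Rᵀ * (Xmᵀ * J * Xm) * R) * (Xmᵀ * J)))) := by
      rw [hEt]
      simp only [Matrix.neg_mul, Matrix.mul_neg, Matrix.mul_assoc]
    rw [hnorm] at e2
    rw [hRkey] at e2
    rw [e1, e2]
  · -- characteristic polynomial part
    set Dm : Matrix (Fin 2) (Fin 2) ℂ := !![lam1, 0; 0, lam1⁻¹] with hDm
    have hX0 : ∀ i, Xm i 0 = x1 i := by intro i; rw [hXm]; simp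
    have hX1 : ∀ i, Xm i 1 = x2 i := by intro i; rw [hXm]; simp
    have hSX : S * Xm = Xm * Dm := by
      ext i j
      fin_cases j
      · have hx := congrFun h1 i
        simp only [Matrix.mulVec, dotProduct, Pi.smul_apply, smul_eq_mul, Fintype.sum_sum_type] at hx
        simp [Matrix.mul_apply, Fin.sum_univ_two, hX0, hX1, hDm]
        linear_combination hx
      · have hx := congrFun h2 i
        simp only [Matrix.mulVec, dotProduct, Pi.smul_apply, smul_eq_mul, Fintype.sum_sum_type] at hx
        simp [Matrix.mul_apply, Fin.sum_univ_two, hX0, hX1, hDm]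
        linear_combination hx
    have hXJX : Xmᵀ * Jᵀ * Xm = -J2 := by
      rw [hJT, Matrix.mul_neg, Matrix.neg_mul, hnorm]
    have hKX : R * Xmᵀ * Jᵀ * S * Xm = -(R * (J2 * Dm)) := by
      have h' : R * Xmᵀ * Jᵀ * S * Xm = R * (Xmᵀ * Jᵀ * Xm * Dm) := by
        calc R * Xmᵀ * Jᵀ * S * Xm = R * (Xmᵀ * (Jᵀ * (S * Xm))) := by
              simp [Matrix.mul_assoc]
          _ = R * (Xmᵀ * (Jᵀ * (Xm * Dm))) := by rw [hSX]
          _ = R * (Xmᵀ * Jᵀ * Xm * Dm) := by simp [Matrix.mul_assoc]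
      rw [h', hXJX]
      simp [Matrix.neg_mul, Matrix.mul_neg, Matrix.mul_assoc]
    have hAB : charmatrix S * Xm.map C = Xm.map C * charmatrix Dm := by
      have hmm' : (S.map C) * (Xm.map C) = (Xm.map C) * (Dm.map C) := by
        rw [← Matrix.map_mul, ← Matrix.map_mul, hSX]
      rw [charmatrix, charmatrix, RingHom.mapMatrix_apply, RingHom.mapMatrix_apply,
        Matrix.sub_mul, Matrix.mul_sub, hmm']
      congr 1
      refine Matrix.ext fun i j => ?_
      rw [Matrix.scalar_apply, Matrix.diagonal_mul, Matrix.scalar_apply, Matrix.mul_diagonal, mul_comm]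
    have hXK : Xm * R * Xmᵀ * Jᵀ * S = Xm * (R * Xmᵀ * Jᵀ * S) := by
      simp [Matrix.mul_assoc]
    have hchar : charmatrix (S + Xm * R * Xmᵀ * Jᵀ * S)
        = charmatrix S - Xm.map C * ((R * Xmᵀ * Jᵀ * S).map C) := by
      rw [hXK, charmatrix, charmatrix, RingHom.mapMatrix_apply, RingHom.mapMatrix_apply]
      have hmap : ((S + Xm * (R * Xmᵀ * Jᵀ * S)).map C)
          = S.map C + (Xm.map C) * ((R * Xmᵀ * Jᵀ * S).map C) := by
        rw [Matrix.map_add ⇑C (fun a b => map_add C a b), Matrix.map_mul]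
      rw [hmap, sub_add_eq_sub_sub]
    have hb := aux_det_swap (charmatrix S) (Xm.map C) ((R * Xmᵀ * Jᵀ * S).map C)
      (charmatrix Dm) hAB
    rw [← hchar] at hb
    have hW : (charmatrix Dm).det = (X - C lam1) * (X - C lam1⁻¹) := by
      simp [det_fin_two, charmatrix_apply, hDm, Matrix.diagonal_apply]
    have hCB : charmatrix Dm - (R * Xmᵀ * Jᵀ * S).map C * Xm.map C
        = charmatrix (Dm - R * (J2 * Dm)) := by
      rw [← Matrix.map_mul, hKX]
      ext i j
      simp only [charmatrix_apply, Matrix.sub_apply, Matrix.map_apply, Matrix.neg_apply,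
        map_sub, map_neg, map_add]
      ring
    have hDN : Dm - R * (J2 * Dm)
        = !![lam1 + R 0 1 * lam1, -(R 0 0 * lam1⁻¹); R 1 1 * lam1, lam1⁻¹ - R 1 0 * lam1⁻¹] := by
      ext i j
      fin_cases i <;> fin_cases j <;>
        simp [hDm, hJ2, Matrix.mul_apply, Fin.sum_univ_two] <;> try ring
    have hA : C lam1 * C lam1⁻¹ = (1 : ℂ[X]) := by
      rw [← C_mul, mul_inv_cancel₀ hlam1, C_1]
    have hB : C mu * C mu⁻¹ = (1 : ℂ[X]) := by
      rw [← C_mul, mul_inv_cancel₀ hmu, C_1]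
    have h3 : (C (lam1 * R 0 1 - lam1⁻¹ * R 1 0) : ℂ[X])
        = C ((mu + mu⁻¹) - (lam1 + lam1⁻¹)) := by rw [hR1]
    have h4 : (C (R 0 1 - R 1 0 + R 0 0 * R 1 1 - R 0 1 * R 1 0) : ℂ[X]) = C 0 := by rw [hR2]
    simp only [_root_.map_mul, map_sub, map_add] at h3
    simp only [_root_.map_mul, map_sub, map_add, map_zero] at h4
    have hcm : ∀ a b c d : ℂ, charmatrix !![a, b; c, d] = !![X - C a, -C b; -C c, X - C d] := by
      intro a b c d
      refine Matrix.ext fun i j => ?_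
      fin_cases i <;> fin_cases j <;>
        simp [charmatrix_apply, Matrix.diagonal_apply]
    have hM : (charmatrix (Dm - R * (J2 * Dm))).det = (X - C mu) * (X - C mu⁻¹) := by
      rw [hDN, hcm, det_fin_two_of]
      simp only [map_add, map_sub, _root_.map_mul, map_neg]
      linear_combination (-(X : ℂ[X])) * h3
        + ((1 + C (R 0 1)) * (1 - C (R 1 0)) + C (R 0 0) * C (R 1 1)) * hA + h4 - hB
    show (charmatrix (S + Xm * R * Xmᵀ * Jᵀ * S)).det * ((X - C lam1) * (X - C lam1⁻¹))
        = (charmatrix S).det * ((X - C mu) * (X - C mu⁻¹))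
    rw [← hW, ← hM, ← hCB]
    exact hb
end

section
/- Let S be a symplectic 2n×2n matrix whose eigenvalue λ₁ has at least one 1×1 Jordan block (equivalently, its Segre characteristic contains a 1). Then there exist eigenvectors x₁ of S for λ₁ and x₂ of S for λ₁⁻¹ with x₁ᵀJx₂ ≠ 0. -/
open Matrix

/-- If the eigenvalue `λ₁` of the symplectic matrix `S` has a `1×1` Jordan block
(i.e. there is an eigenvector of `S` for `λ₁` not lying in the range of `S - λ₁ I`),
then there are eigenvectors `x₁` for `λ₁` and `x₂` for `λ₁⁻¹` with `x₁ᵀ J x₂ ≠ 0`. -/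
theorem trivial_jordan_block_gives_nondegenerate_pair (n : ℕ)
    (J : Matrix (Fin n ⊕ Fin n) (Fin n ⊕ Fin n) ℂ)
    (hJ : J = Matrix.fromBlocks 0 1 (-1) 0)
    (S : Matrix (Fin n ⊕ Fin n) (Fin n ⊕ Fin n) ℂ)
    (hS : Sᵀ * J * S = J)
    (lam1 : ℂ)
    (hblock : ∃ x : Fin n ⊕ Fin n → ℂ,
      S.mulVec x = lam1 • x ∧ x ∉ Set.range (S - lam1 • 1).mulVec) :
    ∃ x1 x2 : Fin n ⊕ Fin n → ℂ, x1 ≠ 0 ∧ x2 ≠ 0 ∧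
      S.mulVec x1 = lam1 • x1 ∧ S.mulVec x2 = lam1⁻¹ • x2 ∧
      x1 ⬝ᵥ J.mulVec x2 ≠ 0 := by
  obtain ⟨x, hx, hxnr⟩ := hblock
  -- basic facts about J
  have hJJ : J * J = -1 := by
    rw [hJ, Matrix.fromBlocks_multiply]
    simp [← Matrix.fromBlocks_one, Matrix.fromBlocks_neg]
  have hJt : Jᵀ = -J := by
    rw [hJ, Matrix.fromBlocks_transpose]
    simp [Matrix.fromBlocks_neg]
  have hnJJ : (-J) * J = 1 := by rw [neg_mul, hJJ, neg_neg]
  have hJnJ : J * (-J) = 1 := by rw [mul_neg, hJJ, neg_neg]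
  -- inverse of S
  set T : Matrix (Fin n ⊕ Fin n) (Fin n ⊕ Fin n) ℂ := (-J) * Sᵀ * J with hT
  have hTS : T * S = 1 := by
    rw [hT, mul_assoc, mul_assoc, ← mul_assoc Sᵀ, hS, hnJJ]
  have hST : S * T = 1 := mul_eq_one_comm.mp hTS
  have hTtSt : Tᵀ * Sᵀ = 1 := by
    rw [← Matrix.transpose_mul, hST, Matrix.transpose_one]
  have hTt : Tᵀ = (-J) * S * J := by
    rw [hT, Matrix.transpose_mul, Matrix.transpose_mul, hJt, Matrix.transpose_transpose,
      Matrix.transpose_neg, hJt, neg_neg, mul_assoc]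
  -- x ≠ 0
  have hx0 : x ≠ 0 := by
    intro h
    exact hxnr ⟨0, by rw [Matrix.mulVec_zero, h]⟩
  -- lam1 ≠ 0
  have hlam : lam1 ≠ 0 := by
    intro h
    apply hx0
    have : S.mulVec x = 0 := by rw [hx, h, zero_smul]
    calc x = (T * S).mulVec x := by rw [hTS, Matrix.one_mulVec]
    _ = T.mulVec (S.mulVec x) := by rw [Matrix.mulVec_mulVec]
    _ = 0 := by rw [this, Matrix.mulVec_zero]
  -- get z with (S - lam1 • 1)ᵀ z = 0 and z ⬝ x ≠ 0
  obtain ⟨z, hzker, hzx⟩ : ∃ z : Fin n ⊕ Fin n → ℂ,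
      (S - lam1 • 1)ᵀ.mulVec z = 0 ∧ z ⬝ᵥ x ≠ 0 := by
    by_contra h
    push_neg at h
    apply hxnr
    set A := S - lam1 • 1 with hA
    have hmem : x ∈ LinearMap.range A.mulVecLin := by
      rw [← Subspace.forall_mem_dualAnnihilator_apply_eq_zero_iff]
      intro φ hφ
      rw [Submodule.mem_dualAnnihilator] at hφ
      set z : Fin n ⊕ Fin n → ℂ := fun i => φ (Pi.single i 1) with hz
      have hφv : ∀ v : Fin n ⊕ Fin n → ℂ, φ v = z ⬝ᵥ v := by
        intro v
        conv_lhs => rw [← Finset.univ_sum_single v]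
        rw [map_sum, dotProduct]
        refine Finset.sum_congr rfl fun i _ => ?_
        have h2 : (Pi.single i (v i) : Fin n ⊕ Fin n → ℂ)
            = v i • (Pi.single i 1 : Fin n ⊕ Fin n → ℂ) := by
          funext j
          simp [Pi.single_apply, mul_comm]
        rw [h2, _root_.map_smul, smul_eq_mul, hz, mul_comm]
      have hAz : Aᵀ.mulVec z = 0 := by
        funext i
        have h1 : (Aᵀ.mulVec z) ⬝ᵥ Pi.single i (1:ℂ) = 0 := by
          rw [Matrix.mulVec_transpose, ← Matrix.dotProduct_mulVec, ← hφv]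
          exact hφ _ (LinearMap.mem_range_self _ _)
        simpa [dotProduct_single] using h1
      rw [hφv]
      exact h z hAz
    obtain ⟨y, hy⟩ := hmem
    exact ⟨y, by rw [← hy, Matrix.mulVecLin_apply]⟩
  -- z is an eigenvector of Sᵀ for lam1
  have hz_eig : Sᵀ.mulVec z = lam1 • z := by
    have := hzker
    rw [Matrix.transpose_sub, Matrix.transpose_smul, Matrix.transpose_one,
      Matrix.sub_mulVec, sub_eq_zero, Matrix.smul_mulVec, Matrix.one_mulVec] at this
    exact this
  -- Tᵀ z = lam1⁻¹ z
  have hTz : Tᵀ.mulVec z = lam1⁻¹ • z := by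
    have h1 : Tᵀ.mulVec (Sᵀ.mulVec z) = z := by
      rw [Matrix.mulVec_mulVec, hTtSt, Matrix.one_mulVec]
    rw [hz_eig, Matrix.mulVec_smul] at h1
    calc Tᵀ.mulVec z = lam1⁻¹ • lam1 • Tᵀ.mulVec z := by
          rw [smul_smul, inv_mul_cancel₀ hlam, one_smul]
    _ = lam1⁻¹ • z := by rw [h1]
  set x2 : Fin n ⊕ Fin n → ℂ := (-J).mulVec z with hx2
  have hJx2 : J.mulVec x2 = z := by
    rw [hx2, Matrix.mulVec_mulVec, hJnJ, Matrix.one_mulVec]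
  have hx2eig : S.mulVec x2 = lam1⁻¹ • x2 := by
    have hSnJ : S * (-J) = (-J) * Tᵀ := by
      rw [hTt, ← mul_assoc, ← mul_assoc, neg_mul_neg, hJJ, neg_one_mul, mul_neg, neg_mul]
    rw [hx2, Matrix.mulVec_mulVec, hSnJ, ← Matrix.mulVec_mulVec, hTz, Matrix.mulVec_smul]
  have hz0 : z ≠ 0 := by
    intro h; exact hzx (by rw [h, zero_dotProduct])
  have hx20 : x2 ≠ 0 := by
    intro h
    apply hz0
    rw [← hJx2, h, Matrix.mulVec_zero]
  exact ⟨x, x2, hx0, hx20, hx, hx2eig, by rw [hJx2, dotProduct_comm]; exact hzx⟩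
end

section
/- If a 2n×2n symplectic matrix S is diagonalizable and λ₁ is an eigenvalue of S, then there exist eigenvectors x₁ for λ₁ and x₂ for λ₁⁻¹ with x₁ᵀJx₂ ≠ 0. -/
open Matrix Polynomial

/-- Evaluating the characteristic polynomial at a point gives a determinant. -/
lemma charpoly_eval_aux {m : Type*} [Fintype m] [DecidableEq m]
    (M : Matrix m m ℂ) (x : ℂ) :
    M.charpoly.eval x = (x • (1 : Matrix m m ℂ) - M).det := by
  have h : M.charpoly.eval x = ((charmatrix M).map (evalRingHom x)).det := by
    rw [Matrix.charpoly]
    exact RingHom.map_det (evalRingHom x) M.charmatrix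
  rw [h]
  congr 1
  ext i j
  by_cases hij : i = j
  · subst hij
    simp [charmatrix_apply_eq, Matrix.one_apply]
  · simp [charmatrix_apply_ne _ _ _ hij, Matrix.one_apply_ne hij]

/-- If a symplectic matrix `S` is diagonalizable and `λ₁` is an eigenvalue of `S`,
then there exist eigenvectors `x₁` for `λ₁` and `x₂` for `λ₁⁻¹` with
`x₁ᵀ J x₂ ≠ 0`. -/
theorem diagonalizable_gives_nondegenerate_pair (n : ℕ)
    (J : Matrix (Fin n ⊕ Fin n) (Fin n ⊕ Fin n) ℂ)
    (hJ : J = Matrix.fromBlocks 0 1 (-1) 0)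
    (S : Matrix (Fin n ⊕ Fin n) (Fin n ⊕ Fin n) ℂ)
    (hS : Sᵀ * J * S = J)
    (hdiag : ∃ (P : Matrix (Fin n ⊕ Fin n) (Fin n ⊕ Fin n) ℂ)
      (d : Fin n ⊕ Fin n → ℂ), IsUnit P.det ∧ S = P * Matrix.diagonal d * P⁻¹)
    (lam1 : ℂ) (hlam1 : S.charpoly.IsRoot lam1) :
    ∃ x1 x2 : Fin n ⊕ Fin n → ℂ, x1 ≠ 0 ∧ x2 ≠ 0 ∧
      S.mulVec x1 = lam1 • x1 ∧ S.mulVec x2 = lam1⁻¹ • x2 ∧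
      x1 ⬝ᵥ J.mulVec x2 ≠ 0 := by
  obtain ⟨P, d, hP, hSP⟩ := hdiag
  have hPinv : P * P⁻¹ = 1 := Matrix.mul_nonsing_inv P hP
  have hPinv' : P⁻¹ * P = 1 := Matrix.nonsing_inv_mul P hP
  have hSP2 : S * P = P * Matrix.diagonal d := by
    rw [hSP, Matrix.mul_assoc, hPinv', Matrix.mul_one]
  -- J * J = -1
  have hJJ : J * J = -1 := by
    subst hJ
    ext (i | i) (j | j) <;>
      simp [Matrix.fromBlocks_multiply, Matrix.one_apply]
  -- invariance of the symplectic form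
  have hinv : ∀ u v : Fin n ⊕ Fin n → ℂ,
      (S *ᵥ u) ⬝ᵥ (J *ᵥ (S *ᵥ v)) = u ⬝ᵥ (J *ᵥ v) := by
    intro u v
    calc (S *ᵥ u) ⬝ᵥ (J *ᵥ (S *ᵥ v))
        = ((S *ᵥ u) ᵥ* (J * S)) ⬝ᵥ v := by
          rw [Matrix.mulVec_mulVec, Matrix.dotProduct_mulVec]
      _ = (u ᵥ* (Sᵀ * (J * S))) ⬝ᵥ v := by rw [Matrix.vecMul_mulVec]
      _ = u ⬝ᵥ ((Sᵀ * (J * S)) *ᵥ v) := by rw [Matrix.dotProduct_mulVec]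
      _ = u ⬝ᵥ (J *ᵥ v) := by rw [← Matrix.mul_assoc, hS]
  -- eigenvector for lam1
  have hdet : (lam1 • (1 : Matrix (Fin n ⊕ Fin n) (Fin n ⊕ Fin n) ℂ) - S).det = 0 := by
    rw [← charpoly_eval_aux]; exact hlam1
  obtain ⟨x1, hx1ne, hx1⟩ :=
    (Matrix.exists_mulVec_eq_zero_iff
      (M := lam1 • (1 : Matrix (Fin n ⊕ Fin n) (Fin n ⊕ Fin n) ℂ) - S)).2 hdet
  have hSx1 : S *ᵥ x1 = lam1 • x1 := by
    rw [Matrix.sub_mulVec, sub_eq_zero, Matrix.smul_mulVec, Matrix.one_mulVec] at hx1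
    exact hx1.symm
  -- nondegeneracy: q := x1 ᵥ* J is nonzero
  set q : Fin n ⊕ Fin n → ℂ := x1 ᵥ* J with hq
  have hqne : q ≠ 0 := by
    intro h0
    apply hx1ne
    have : (x1 ᵥ* J) ᵥ* J = (0 : Fin n ⊕ Fin n → ℂ) ᵥ* J := by rw [← hq, h0]
    rw [Matrix.vecMul_vecMul, hJJ, Matrix.zero_vecMul] at this
    have hneg : -x1 = 0 := by
      have := this
      rwa [Matrix.vecMul_neg, Matrix.vecMul_one] at this
    simpa using hneg
  -- pick a coordinate where q is nonzero and build a dual vector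
  obtain ⟨j0, hj0⟩ : ∃ j0, q j0 ≠ 0 := by
    by_contra h
    push_neg at h
    exact hqne (funext h)
  set y : Fin n ⊕ Fin n → ℂ := Pi.single j0 1 with hy
  have hωy : x1 ⬝ᵥ (J *ᵥ y) ≠ 0 := by
    rw [Matrix.dotProduct_mulVec, ← hq]
    simpa [hy] using hj0
  -- expand y over the columns of P
  set c : Fin n ⊕ Fin n → ℂ := P⁻¹ *ᵥ y with hc
  have hyc : y = P *ᵥ c := by
    rw [hc, Matrix.mulVec_mulVec, hPinv, Matrix.one_mulVec]
  have hsum : x1 ⬝ᵥ (J *ᵥ y) = ∑ j, (q ᵥ* P) j * c j := by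
    rw [Matrix.dotProduct_mulVec, ← hq, hyc, Matrix.dotProduct_mulVec,
      Matrix.vecMul_vecMul]
    rfl
  obtain ⟨j, hjne⟩ : ∃ j, (q ᵥ* P) j * c j ≠ 0 := by
    by_contra h
    push_neg at h
    apply hωy
    rw [hsum, Finset.sum_eq_zero fun j _ => h j]
  have hqPj : (q ᵥ* P) j ≠ 0 := fun h => hjne (by rw [h, zero_mul])
  -- x2 is the j-th column of P
  set x2 : Fin n ⊕ Fin n → ℂ := fun i => P i j with hx2
  have hω : x1 ⬝ᵥ (J *ᵥ x2) ≠ 0 := by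
    rw [Matrix.dotProduct_mulVec, ← hq]
    have he : q ⬝ᵥ x2 = (q ᵥ* P) j := by
      simp [Matrix.vecMul, dotProduct, hx2]
    rw [he]
    exact hqPj
  have hx2ne : x2 ≠ 0 := by
    intro h0
    apply hω
    rw [h0, Matrix.mulVec_zero, dotProduct_zero]
  -- x2 is an eigenvector for d j
  have hSx2 : S *ᵥ x2 = d j • x2 := by
    ext i
    have h1 : (S * P) i j = (P * Matrix.diagonal d) i j := by rw [hSP2]
    rw [Matrix.mul_diagonal] at h1
    calc (S *ᵥ x2) i = (S * P) i j := by
          simp [Matrix.mulVec, Matrix.mul_apply, dotProduct, hx2]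
      _ = d j * x2 i := by rw [h1, hx2]; exact mul_comm _ _
      _ = (d j • x2) i := rfl
  -- from form invariance, lam1 * d j = 1
  have hmul : lam1 * d j = 1 := by
    have h2 := hinv x1 x2
    rw [hSx1, hSx2, Matrix.mulVec_smul, dotProduct_smul, smul_dotProduct] at h2
    have h2' : d j * (lam1 * (x1 ⬝ᵥ (J *ᵥ x2))) = x1 ⬝ᵥ (J *ᵥ x2) := by
      simpa [smul_eq_mul] using h2
    have h3 : (lam1 * d j) * (x1 ⬝ᵥ (J *ᵥ x2)) = 1 * (x1 ⬝ᵥ (J *ᵥ x2)) := by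
      rw [one_mul]
      conv_rhs => rw [← h2']
      ring
    exact mul_right_cancel₀ hω h3
  have hdj : d j = lam1⁻¹ := (inv_eq_of_mul_eq_one_right hmul).symm
  exact ⟨x1, x2, hx1ne, hx2ne, hSx1, by rw [hSx2, hdj], hω⟩
end

section
/- Let S be symplectic with SX = X·diag(λ₁, λ₁⁻¹), XᵀJX = J₂, λ₁ ≠ ±1, and let R ∈ M₂(ℂ) satisfy the conditions of the structure-preserving Rado theorem. Then (I + XRXᵀJᵀ)S = S(I + XRXᵀJᵀ) holds if and only if the diagonal entries of R vanish (i.e. R equals R₁ or R₂ from the two admissible off-diagonal solutions). -/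
open Matrix

/-- For `λ₁ ≠ ±1`, the commutation relation `(I + X R Xᵀ Jᵀ) S = S (I + X R Xᵀ Jᵀ)`
holds if and only if the diagonal entries of `R` vanish (i.e. `R` is one of the two
admissible off-diagonal solutions `R₁`, `R₂`). -/
theorem commutation_iff_offdiagonal (n : ℕ)
    (J : Matrix (Fin n ⊕ Fin n) (Fin n ⊕ Fin n) ℂ)
    (hJ : J = Matrix.fromBlocks 0 1 (-1) 0)
    (S : Matrix (Fin n ⊕ Fin n) (Fin n ⊕ Fin n) ℂ)
    (hS : Sᵀ * J * S = J)
    (lam1 mu : ℂ) (hlam1 : lam1 ≠ 1) (hlam1' : lam1 ≠ -1) (hmu : mu ≠ 0)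
    (x1 x2 : Fin n ⊕ Fin n → ℂ)
    (h1 : S.mulVec x1 = lam1 • x1) (h2 : S.mulVec x2 = lam1⁻¹ • x2)
    (Xm : Matrix (Fin n ⊕ Fin n) (Fin 2) ℂ)
    (hXm : Xm = Matrix.of fun i j => if j = 0 then x1 i else x2 i)
    (hnorm : Xmᵀ * J * Xm = !![0, 1; -1, 0])
    (R : Matrix (Fin 2) (Fin 2) ℂ)
    (hR1 : lam1 * R 0 1 - lam1⁻¹ * R 1 0 = (mu + mu⁻¹) - (lam1 + lam1⁻¹))
    (hR2 : R 0 1 - R 1 0 + R 0 0 * R 1 1 - R 0 1 * R 1 0 = 0) :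
    (1 + Xm * R * Xmᵀ * Jᵀ) * S = S * (1 + Xm * R * Xmᵀ * Jᵀ) ↔
      R 0 0 = 0 ∧ R 1 1 = 0 := by
  set D : Matrix (Fin 2) (Fin 2) ℂ := !![lam1, 0; 0, lam1⁻¹] with hD
  set Dinv : Matrix (Fin 2) (Fin 2) ℂ := !![lam1⁻¹, 0; 0, lam1] with hDinv
  -- column multiplication lemmas
  have colmul : ∀ (T : Matrix (Fin n ⊕ Fin n) (Fin n ⊕ Fin n) ℂ) (y1 y2 : Fin n ⊕ Fin n → ℂ),
      T * (Matrix.of fun i (j : Fin 2) => if j = 0 then y1 i else y2 i) =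
        Matrix.of (fun i (j : Fin 2) => if j = 0 then T.mulVec y1 i else T.mulVec y2 i) := by
    intro T y1 y2
    ext i j
    fin_cases j <;> simp [Matrix.mul_apply, Matrix.mulVec, dotProduct]
  have mulrow : ∀ (y1 y2 : Fin n ⊕ Fin n → ℂ) (C : Matrix (Fin 2) (Fin 2) ℂ),
      (Matrix.of fun i (j : Fin 2) => if j = 0 then y1 i else y2 i) * C =
        Matrix.of (fun i (j : Fin 2) =>
          if j = 0 then y1 i * C 0 0 + y2 i * C 1 0 else y1 i * C 0 1 + y2 i * C 1 1) := by
    intro y1 y2 C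
    ext i j
    fin_cases j <;> simp [Matrix.mul_apply, Fin.sum_univ_two]
  -- S * Xm = Xm * D
  have hSX : S * Xm = Xm * D := by
    rw [hXm, colmul, h1, h2, mulrow]
    ext i j
    fin_cases j <;> simp [hD, mul_comm]
  -- transpose facts
  have hDt : Dᵀ = D := by ext i j; fin_cases i <;> fin_cases j <;> simp [hD]
  have hDinvt : Dinvᵀ = Dinv := by ext i j; fin_cases i <;> fin_cases j <;> simp [hDinv]
  have hJt : Jᵀ = -J := by
    rw [hJ]
    ext i j
    cases i <;> cases j <;> simp [Matrix.fromBlocks, Matrix.transpose_apply, Matrix.one_apply, eq_comm]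
  -- lam1 * lam1⁻¹ = 1
  have h3 : D * !![(0:ℂ), 1; -1, 0] * D = !![(0:ℂ), 1; -1, 0] := by
    calc D * !![(0:ℂ), 1; -1, 0] * D = D * (Xmᵀ * J * Xm) * D := by rw [hnorm]
      _ = (Xm * D)ᵀ * J * (Xm * D) := by
          rw [transpose_mul, hDt]; simp only [Matrix.mul_assoc]
      _ = (S * Xm)ᵀ * J * (S * Xm) := by rw [hSX]
      _ = Xmᵀ * (Sᵀ * J * S) * Xm := by
          rw [transpose_mul]; simp only [Matrix.mul_assoc]
      _ = Xmᵀ * J * Xm := by rw [hS, Matrix.mul_assoc]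
      _ = !![(0:ℂ), 1; -1, 0] := hnorm
  have hlam : lam1 * lam1⁻¹ = 1 := by
    have := congrFun (congrFun h3 0) 1
    simpa [Matrix.mul_apply, Fin.sum_univ_two, hD] using this
  have hl0 : lam1 ≠ 0 := fun h => by simp [h] at hlam
  -- eigenvector facts for Sᵀ with J
  have key : ∀ (x : Fin n ⊕ Fin n → ℂ) (a b : ℂ), S.mulVec x = a • x → a * b = 1 →
      Sᵀ.mulVec (J.mulVec x) = b • (J.mulVec x) := by
    intro x a b hx hab
    have e : (Sᵀ * J * S).mulVec x = J.mulVec x := by rw [hS]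
    rw [← Matrix.mulVec_mulVec, ← Matrix.mulVec_mulVec, hx, Matrix.mulVec_smul,
      Matrix.mulVec_smul] at e
    calc Sᵀ.mulVec (J.mulVec x) = (b * a) • Sᵀ.mulVec (J.mulVec x) := by
          rw [mul_comm b a, hab, one_smul]
      _ = b • (a • Sᵀ.mulVec (J.mulVec x)) := by rw [smul_smul]
      _ = b • (J.mulVec x) := by rw [e]
  have v1 := key x1 lam1 lam1⁻¹ h1 hlam
  have v2 := key x2 lam1⁻¹ lam1 h2 (by rw [mul_comm]; exact hlam)
  -- Sᵀ * (J * Xm) = (J * Xm) * Dinv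
  have hSJ : Sᵀ * (J * Xm) = (J * Xm) * Dinv := by
    rw [hXm, colmul J x1 x2, colmul Sᵀ, v1, v2, mulrow]
    ext i j
    fin_cases j <;> simp [hDinv, mul_comm]
  -- Xmᵀ * (Jᵀ * S) = Dinv * (Xmᵀ * Jᵀ)
  have hXJS : Xmᵀ * (Jᵀ * S) = Dinv * (Xmᵀ * Jᵀ) := by
    have := congrArg Matrix.transpose hSJ
    simp only [transpose_mul, transpose_transpose, hDinvt] at this
    calc Xmᵀ * (Jᵀ * S) = Xmᵀ * Jᵀ * S := by rw [Matrix.mul_assoc]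
      _ = Dinv * (Xmᵀ * Jᵀ) := by rw [this]
  -- products with S
  have hMS : Xm * R * Xmᵀ * Jᵀ * S = Xm * (R * Dinv) * (Xmᵀ * Jᵀ) := by
    calc Xm * R * Xmᵀ * Jᵀ * S = Xm * (R * (Xmᵀ * (Jᵀ * S))) := by
          simp only [Matrix.mul_assoc]
      _ = Xm * (R * (Dinv * (Xmᵀ * Jᵀ))) := by rw [hXJS]
      _ = Xm * (R * Dinv) * (Xmᵀ * Jᵀ) := by simp only [Matrix.mul_assoc]
  have hSM : S * (Xm * R * Xmᵀ * Jᵀ) = Xm * (D * R) * (Xmᵀ * Jᵀ) := by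
    calc S * (Xm * R * Xmᵀ * Jᵀ) = (S * Xm) * (R * (Xmᵀ * Jᵀ)) := by
          simp only [Matrix.mul_assoc]
      _ = (Xm * D) * (R * (Xmᵀ * Jᵀ)) := by rw [hSX]
      _ = Xm * (D * R) * (Xmᵀ * Jᵀ) := by simp only [Matrix.mul_assoc]
  -- sandwich lemma
  have hXJXneg : Xmᵀ * Jᵀ * Xm = -(!![(0:ℂ), 1; -1, 0]) := by
    rw [hJt, ← hnorm]
    simp only [Matrix.mul_neg, Matrix.neg_mul]
  have sandwich : ∀ A : Matrix (Fin 2) (Fin 2) ℂ,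
      Xmᵀ * J * (Xm * A * (Xmᵀ * Jᵀ)) * Xm
        = !![(0:ℂ), 1; -1, 0] * A * (-(!![(0:ℂ), 1; -1, 0])) := by
    intro A
    calc Xmᵀ * J * (Xm * A * (Xmᵀ * Jᵀ)) * Xm
        = (Xmᵀ * J * Xm) * A * (Xmᵀ * Jᵀ * Xm) := by simp only [Matrix.mul_assoc]
      _ = _ := by rw [hnorm, hXJXneg]
  -- nonvanishing of lam1 - lam1⁻¹
  have hne : lam1 - lam1⁻¹ ≠ 0 := by
    intro hc
    have h11 : lam1 = lam1⁻¹ := sub_eq_zero.mp hc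
    have : lam1 * lam1 = 1 := by
      calc lam1 * lam1 = lam1 * lam1⁻¹ := by rw [← h11]
        _ = 1 := hlam
    rcases mul_self_eq_one_iff.mp this with h | h
    · exact hlam1 h
    · exact hlam1' h
  constructor
  · intro h
    have hc : Xm * R * Xmᵀ * Jᵀ * S = S * (Xm * R * Xmᵀ * Jᵀ) := by
      have h' : S + Xm * R * Xmᵀ * Jᵀ * S = S + S * (Xm * R * Xmᵀ * Jᵀ) := by
        calc S + Xm * R * Xmᵀ * Jᵀ * S = (1 + Xm * R * Xmᵀ * Jᵀ) * S := by
              rw [add_mul, one_mul]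
          _ = S * (1 + Xm * R * Xmᵀ * Jᵀ) := h
          _ = S + S * (Xm * R * Xmᵀ * Jᵀ) := by rw [mul_add, mul_one]
      exact add_left_cancel h'
    rw [hMS, hSM] at hc
    have hs := congrArg (fun A => Xmᵀ * J * A * Xm) hc
    simp only [sandwich] at hs
    have e00 := congrFun (congrFun hs 0) 0
    have e11 := congrFun (congrFun hs 1) 1
    simp [Matrix.mul_apply, Fin.sum_univ_two, hD, hDinv, Matrix.vecMul, dotProduct, Matrix.vecHead, Matrix.vecTail] at e00 e11
    constructor
    · have : R 0 0 * (lam1⁻¹ - lam1) = 0 := by linear_combination e11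
      rcases mul_eq_zero.mp this with h0 | h0
      · exact h0
      · exact absurd (by linear_combination -h0) hne
    · have : R 1 1 * (lam1 - lam1⁻¹) = 0 := by linear_combination e00
      rcases mul_eq_zero.mp this with h0 | h0
      · exact h0
      · exact absurd h0 hne
  · rintro ⟨hz0, hz1⟩
    have hRD : R * Dinv = D * R := by
      ext i j
      fin_cases i <;> fin_cases j <;>
        simp [hD, hDinv, Matrix.mul_apply, Fin.sum_univ_two, hz0, hz1, mul_comm]
    calc (1 + Xm * R * Xmᵀ * Jᵀ) * S = S + Xm * R * Xmᵀ * Jᵀ * S := by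
          rw [add_mul, one_mul]
      _ = S + Xm * (R * Dinv) * (Xmᵀ * Jᵀ) := by rw [hMS]
      _ = S + Xm * (D * R) * (Xmᵀ * Jᵀ) := by rw [hRD]
      _ = S + S * (Xm * R * Xmᵀ * Jᵀ) := by rw [hSM]
      _ = S * (1 + Xm * R * Xmᵀ * Jᵀ) := by rw [mul_add, mul_one]
end

section
/- If λ₁ = ±1 and R ∈ M₂(ℂ) is any matrix satisfying the structure-preserving conditions, then (I + XRXᵀJᵀ)S = S(I + XRXᵀJᵀ). -/
open Matrix

/-- For `λ₁ = ±1`, any matrix `R` satisfying the structure-preserving conditions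
yields the commutation relation `(I + X R Xᵀ Jᵀ) S = S (I + X R Xᵀ Jᵀ)`. -/
theorem commutation_for_pm_one (n : ℕ)
    (J : Matrix (Fin n ⊕ Fin n) (Fin n ⊕ Fin n) ℂ)
    (hJ : J = Matrix.fromBlocks 0 1 (-1) 0)
    (S : Matrix (Fin n ⊕ Fin n) (Fin n ⊕ Fin n) ℂ)
    (hS : Sᵀ * J * S = J)
    (lam1 mu : ℂ) (hlam1 : lam1 = 1 ∨ lam1 = -1) (hmu : mu ≠ 0)
    (x1 x2 : Fin n ⊕ Fin n → ℂ)
    (h1 : S.mulVec x1 = lam1 • x1) (h2 : S.mulVec x2 = lam1⁻¹ • x2)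
    (Xm : Matrix (Fin n ⊕ Fin n) (Fin 2) ℂ)
    (hXm : Xm = Matrix.of fun i j => if j = 0 then x1 i else x2 i)
    (hnorm : Xmᵀ * J * Xm = !![0, 1; -1, 0])
    (R : Matrix (Fin 2) (Fin 2) ℂ)
    (hR1 : lam1 * R 0 1 - lam1⁻¹ * R 1 0 = (mu + mu⁻¹) - (lam1 + lam1⁻¹))
    (hR2 : R 0 1 - R 1 0 + R 0 0 * R 1 1 - R 0 1 * R 1 0 = 0) :
    (1 + Xm * R * Xmᵀ * Jᵀ) * S = S * (1 + Xm * R * Xmᵀ * Jᵀ) := by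
  have hl2 : lam1 * lam1 = 1 := by rcases hlam1 with h | h <;> simp [h]
  have hinv : lam1⁻¹ = lam1 := by rcases hlam1 with h | h <;> norm_num [h]
  -- S * Xm = lam1 • Xm
  have hSX : S * Xm = lam1 • Xm := by
    subst hXm
    ext i j
    fin_cases j
    · have := congrFun h1 i
      simpa [Matrix.mulVec, dotProduct, Matrix.mul_apply] using this
    · have := congrFun h2 i
      rw [hinv] at this
      simpa [Matrix.mulVec, dotProduct, Matrix.mul_apply] using this
  have hXS : Xmᵀ * Sᵀ = lam1 • Xmᵀ := by
    rw [← Matrix.transpose_mul, hSX, Matrix.transpose_smul]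
  -- Sᵀ * Jᵀ * S = Jᵀ
  have hJS : Sᵀ * Jᵀ * S = Jᵀ := by
    have := congrArg Matrix.transpose hS
    simpa [Matrix.transpose_mul, Matrix.mul_assoc] using this
  have hX : Xmᵀ = lam1 • (Xmᵀ * Sᵀ) := by
    rw [hXS, smul_smul, hl2, one_smul]
  have key : Xmᵀ * Jᵀ * S = lam1 • (Xmᵀ * Jᵀ) := by
    calc Xmᵀ * Jᵀ * S = (lam1 • (Xmᵀ * Sᵀ)) * Jᵀ * S := by rw [← hX]
      _ = lam1 • (Xmᵀ * (Sᵀ * Jᵀ * S)) := by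
          simp only [Matrix.smul_mul, Matrix.mul_assoc]
      _ = lam1 • (Xmᵀ * Jᵀ) := by rw [hJS]
  have hA : Xm * R * Xmᵀ * Jᵀ * S = S * (Xm * R * Xmᵀ * Jᵀ) := by
    calc Xm * R * Xmᵀ * Jᵀ * S = Xm * R * (Xmᵀ * Jᵀ * S) := by
          simp only [Matrix.mul_assoc]
      _ = lam1 • (Xm * R * Xmᵀ * Jᵀ) := by
          rw [key]; simp only [Matrix.mul_smul, Matrix.mul_assoc]
      _ = (lam1 • Xm) * R * Xmᵀ * Jᵀ := by
          simp only [Matrix.smul_mul]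
      _ = S * (Xm * R * Xmᵀ * Jᵀ) := by
          rw [← hSX]; simp only [Matrix.mul_assoc]
  rw [add_mul, mul_add, one_mul, mul_one, hA]
end

section
/- Let S be symplectic with eigenvectors x₁, x₂ for λ₁ and λ₁⁻¹, and let y₁,…,y_p be a Jordan chain of S for an eigenvalue λ with λ ≠ λ₁ and λ ≠ λ₁⁻¹. Then x₁ᵀJy_k = 0 and x₂ᵀJy_k = 0 for all k = 1,…,p. -/
open Matrix

lemma symp_invariant {m : Type*} [Fintype m] [DecidableEq m]
    (J S : Matrix m m ℂ) (hS : Sᵀ * J * S = J) (u v : m → ℂ) :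
    (S.mulVec u) ⬝ᵥ J.mulVec (S.mulVec v) = u ⬝ᵥ J.mulVec v :=
  calc (S *ᵥ u) ⬝ᵥ J *ᵥ (S *ᵥ v)
      = (u ᵥ* Sᵀ) ⬝ᵥ (J * S) *ᵥ v := by rw [mulVec_mulVec, vecMul_transpose]
    _ = ((u ᵥ* Sᵀ) ᵥ* (J * S)) ⬝ᵥ v := dotProduct_mulVec _ _ _
    _ = (u ᵥ* (Sᵀ * (J * S))) ⬝ᵥ v := by rw [vecMul_vecMul]
    _ = (u ᵥ* J) ⬝ᵥ v := by rw [← Matrix.mul_assoc, hS]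
    _ = u ⬝ᵥ J *ᵥ v := (dotProduct_mulVec _ _ _).symm

/-- If `y₁, …, y_p` is a Jordan chain of the symplectic matrix `S` for an eigenvalue
`λ ∉ {λ₁, λ₁⁻¹}`, and `x₁, x₂` are eigenvectors for `λ₁, λ₁⁻¹`, then
`x₁ᵀ J y_k = 0` and `x₂ᵀ J y_k = 0` for all `k`. -/
theorem jordan_chain_orthogonal (n : ℕ)
    (J : Matrix (Fin n ⊕ Fin n) (Fin n ⊕ Fin n) ℂ)
    (hJ : J = Matrix.fromBlocks 0 1 (-1) 0)
    (S : Matrix (Fin n ⊕ Fin n) (Fin n ⊕ Fin n) ℂ)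
    (hS : Sᵀ * J * S = J)
    (lam1 lam : ℂ) (hne1 : lam ≠ lam1) (hne2 : lam ≠ lam1⁻¹)
    (x1 x2 : Fin n ⊕ Fin n → ℂ)
    (h1 : S.mulVec x1 = lam1 • x1) (h2 : S.mulVec x2 = lam1⁻¹ • x2)
    (p : ℕ) (y : ℕ → (Fin n ⊕ Fin n → ℂ))
    (hchain0 : (S - lam • 1).mulVec (y 0) = 0)
    (hchain : ∀ k : ℕ, k + 1 < p → (S - lam • 1).mulVec (y (k + 1)) = y k) :
    ∀ k < p, x1 ⬝ᵥ J.mulVec (y k) = 0 ∧ x2 ⬝ᵥ J.mulVec (y k) = 0 := by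
  have key : ∀ (mu : ℂ) (x : Fin n ⊕ Fin n → ℂ), S.mulVec x = mu • x →
      mu * lam ≠ 1 → ∀ (w z : Fin n ⊕ Fin n → ℂ), S.mulVec w = lam • w + z →
      x ⬝ᵥ J.mulVec z = 0 → x ⬝ᵥ J.mulVec w = 0 := by
    intro mu x hx hmul w z hw hz
    have h := symp_invariant J S hS x w
    rw [hx, hw] at h
    have hexp : (mu • x) ⬝ᵥ J.mulVec (lam • w + z)
        = mu * lam * (x ⬝ᵥ J.mulVec w) + mu * (x ⬝ᵥ J.mulVec z) := by
      simp only [Matrix.mulVec_add, dotProduct_add, Matrix.mulVec_smul,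
        dotProduct_smul, smul_dotProduct, smul_eq_mul]
      ring
    have h2 : (mu * lam - 1) * (x ⬝ᵥ J.mulVec w) = 0 := by
      linear_combination h - hexp - mu * hz
    rcases mul_eq_zero.1 h2 with h | h
    · exact absurd (by linear_combination h) hmul
    · exact h
  have hm1 : lam1 * lam ≠ 1 := fun hc =>
    hne2 (inv_eq_of_mul_eq_one_right hc).symm
  have hm2 : lam1⁻¹ * lam ≠ 1 := fun hc => by
    have := (inv_eq_of_mul_eq_one_right hc).symm
    rw [inv_inv] at this
    exact hne1 this
  have hc0 : S.mulVec (y 0) = lam • y 0 + 0 := by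
    have h := hchain0
    rw [Matrix.sub_mulVec, Matrix.smul_mulVec, Matrix.one_mulVec, sub_eq_zero] at h
    simp [h]
  have hck : ∀ k, k + 1 < p → S.mulVec (y (k+1)) = lam • y (k+1) + y k := by
    intro k hk
    have h := hchain k hk
    rwa [Matrix.sub_mulVec, Matrix.smul_mulVec, Matrix.one_mulVec,
      sub_eq_iff_eq_add'] at h
  intro k
  induction k with
  | zero =>
      intro hk
      exact ⟨key lam1 x1 h1 hm1 _ 0 hc0 (by simp), key lam1⁻¹ x2 h2 hm2 _ 0 hc0 (by simp)⟩
  | succ k ih =>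
      intro hk
      obtain ⟨ha, hb⟩ := ih (Nat.lt_of_succ_lt hk)
      exact ⟨key lam1 x1 h1 hm1 _ (y k) (hck k hk) ha,
             key lam1⁻¹ x2 h2 hm2 _ (y k) (hck k hk) hb⟩
end

section
/- Let Ŝ = S + XRXᵀJᵀS be constructed as in the structure-preserving Rado theorem for the eigenvalue pair λ₁, λ₁⁻¹ of the symplectic matrix S. If y₁,…,y_p is a Jordan chain of S for an eigenvalue λ with λ ∉ {λ₁, λ₁⁻¹}, then y₁,…,y_p is also a Jordan chain of Ŝ for λ. -/
open Matrix

private lemma step_lemma {m : Type*} [Fintype m] [DecidableEq m]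
    (S : Matrix m m ℂ) (lam a : ℂ) (w v c : m → ℂ)
    (hw : a • (w ᵥ* S) = w)
    (hc : (S - lam • 1).mulVec v = c)
    (hne : 1 - a * lam ≠ 0) (hc0 : w ⬝ᵥ c = 0) :
    w ⬝ᵥ v = 0 ∧ w ⬝ᵥ S.mulVec v = 0 := by
  have hSy : w ⬝ᵥ S.mulVec v = lam * (w ⬝ᵥ v) + w ⬝ᵥ c := by
    have h := congrArg (fun u => w ⬝ᵥ u) hc
    simp only [Matrix.sub_mulVec, Matrix.smul_mulVec, Matrix.one_mulVec,
      dotProduct_sub, dotProduct_smul, smul_eq_mul] at h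
    linear_combination h
  have e2 : a * (w ⬝ᵥ S.mulVec v) = w ⬝ᵥ v := by
    rw [Matrix.dotProduct_mulVec]
    calc a * (w ᵥ* S ⬝ᵥ v) = (a • (w ᵥ* S)) ⬝ᵥ v := by
          rw [smul_dotProduct]; rfl
      _ = w ⬝ᵥ v := by rw [hw]
  have hy : w ⬝ᵥ v = 0 := by
    have h0 : (1 - a * lam) * (w ⬝ᵥ v) = 0 := by
      linear_combination -e2 + a * hSy + a * hc0
    exact (mul_eq_zero.mp h0).resolve_left hne
  refine ⟨hy, ?_⟩
  rw [hSy, hy, hc0]; ring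

private lemma chain_ortho {m : Type*} [Fintype m] [DecidableEq m]
    (S : Matrix m m ℂ) (lam a : ℂ) (w : m → ℂ)
    (hw : a • (w ᵥ* S) = w) (hne : 1 - a * lam ≠ 0)
    (p : ℕ) (y : ℕ → (m → ℂ))
    (hchain0 : (S - lam • 1).mulVec (y 0) = 0)
    (hchain : ∀ k : ℕ, k + 1 < p → (S - lam • 1).mulVec (y (k + 1)) = y k) :
    ∀ k, (k = 0 ∨ k < p) → w ⬝ᵥ y k = 0 ∧ w ⬝ᵥ S.mulVec (y k) = 0 := by
  intro k
  induction k with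
  | zero =>
    intro _
    exact step_lemma S lam a w (y 0) 0 hw hchain0 hne (dotProduct_zero w)
  | succ k ih =>
    intro hk
    have hkp : k + 1 < p := hk.resolve_left (by simp)
    have ihk := ih (Or.inr (Nat.lt_of_succ_lt hkp))
    exact step_lemma S lam a w (y (k+1)) (y k) hw (hchain k hkp) hne ihk.1

private lemma left_eigen {m : Type*} [Fintype m] [DecidableEq m]
    (J S : Matrix m m ℂ) (hS : Sᵀ * J * S = J)
    (mu : ℂ) (x : m → ℂ) (hx : S.mulVec x = mu • x) :
    mu • ((J *ᵥ x) ᵥ* S) = J *ᵥ x := by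
  have key : Sᵀ *ᵥ (J *ᵥ (S *ᵥ x)) = J *ᵥ x := by
    rw [Matrix.mulVec_mulVec, Matrix.mulVec_mulVec, hS]
  rw [hx, Matrix.mulVec_smul, Matrix.mulVec_smul, Matrix.mulVec_transpose] at key
  exact key

/-- A Jordan chain of the symplectic matrix `S` for an eigenvalue `λ ∉ {λ₁, λ₁⁻¹}`
remains a Jordan chain of `Ŝ = S + X R Xᵀ Jᵀ S` for `λ`. -/
theorem jordan_chain_preserved (n : ℕ)
    (J : Matrix (Fin n ⊕ Fin n) (Fin n ⊕ Fin n) ℂ)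
    (hJ : J = Matrix.fromBlocks 0 1 (-1) 0)
    (S : Matrix (Fin n ⊕ Fin n) (Fin n ⊕ Fin n) ℂ)
    (hS : Sᵀ * J * S = J)
    (lam1 lam : ℂ) (hne1 : lam ≠ lam1) (hne2 : lam ≠ lam1⁻¹)
    (x1 x2 : Fin n ⊕ Fin n → ℂ)
    (h1 : S.mulVec x1 = lam1 • x1) (h2 : S.mulVec x2 = lam1⁻¹ • x2)
    (Xm : Matrix (Fin n ⊕ Fin n) (Fin 2) ℂ)
    (hXm : Xm = Matrix.of fun i j => if j = 0 then x1 i else x2 i)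
    (hnorm : Xmᵀ * J * Xm = !![0, 1; -1, 0])
    (R : Matrix (Fin 2) (Fin 2) ℂ)
    (p : ℕ) (y : ℕ → (Fin n ⊕ Fin n → ℂ))
    (hchain0 : (S - lam • 1).mulVec (y 0) = 0)
    (hchain : ∀ k : ℕ, k + 1 < p → (S - lam • 1).mulVec (y (k + 1)) = y k) :
    ((S + Xm * R * Xmᵀ * Jᵀ * S) - lam • 1).mulVec (y 0) = 0 ∧
      ∀ k : ℕ, k + 1 < p →
        ((S + Xm * R * Xmᵀ * Jᵀ * S) - lam • 1).mulVec (y (k + 1)) = y k := by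
  -- J x1 and J x2 are "generalized left eigenvectors"
  have hw1 : lam1 • ((J *ᵥ x1) ᵥ* S) = J *ᵥ x1 := left_eigen J S hS lam1 x1 h1
  have hw2 : lam1⁻¹ • ((J *ᵥ x2) ᵥ* S) = J *ᵥ x2 := left_eigen J S hS lam1⁻¹ x2 h2
  -- the nonvanishing conditions
  have hc1 : (1 : ℂ) - lam1 * lam ≠ 0 := by
    intro h
    have hm : lam1 * lam = 1 := by linear_combination -h
    have hl : lam1 ≠ 0 := by rintro rfl; simp at hm
    exact hne2 (eq_inv_of_mul_eq_one_left (by linear_combination hm))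
  have hc2 : (1 : ℂ) - lam1⁻¹ * lam ≠ 0 := by
    intro h
    have hm : lam1⁻¹ * lam = 1 := by linear_combination -h
    have hl : lam1⁻¹ ≠ 0 := by rintro hz; rw [hz] at hm; simp at hm
    have hl0 : lam1 ≠ 0 := fun hz => hl (by simp [hz])
    refine hne1 ?_
    field_simp at hm
    exact hm
  have H1 := chain_ortho S lam lam1 (J *ᵥ x1) hw1 hc1 p y hchain0 hchain
  have H2 := chain_ortho S lam lam1⁻¹ (J *ᵥ x2) hw2 hc2 p y hchain0 hchain
  -- the correction term annihilates each chain vector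
  have hT : ∀ z : Fin n ⊕ Fin n → ℂ,
      (J *ᵥ x1) ⬝ᵥ (S *ᵥ z) = 0 → (J *ᵥ x2) ⬝ᵥ (S *ᵥ z) = 0 →
      (Xm * R * Xmᵀ * Jᵀ * S) *ᵥ z = 0 := by
    intro z hz1 hz2
    have hinner : Xmᵀ *ᵥ (Jᵀ *ᵥ (S *ᵥ z)) = 0 := by
      funext j
      have hcol : ∀ x : Fin n ⊕ Fin n → ℂ,
          (fun i => x i) ⬝ᵥ (Jᵀ *ᵥ (S *ᵥ z)) = (J *ᵥ x) ⬝ᵥ (S *ᵥ z) := by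
        intro x
        rw [Matrix.dotProduct_mulVec, Matrix.vecMul_transpose]
      fin_cases j
      · simpa [Matrix.mulVec, dotProduct, hXm] using (hcol x1).trans hz1
      · simpa [Matrix.mulVec, dotProduct, hXm] using (hcol x2).trans hz2
    calc (Xm * R * Xmᵀ * Jᵀ * S) *ᵥ z
        = Xm *ᵥ (R *ᵥ (Xmᵀ *ᵥ (Jᵀ *ᵥ (S *ᵥ z)))) := by
          simp only [Matrix.mulVec_mulVec, Matrix.mul_assoc]
      _ = 0 := by rw [hinner, Matrix.mulVec_zero, Matrix.mulVec_zero]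
  have hsplit : ∀ z : Fin n ⊕ Fin n → ℂ,
      ((S + Xm * R * Xmᵀ * Jᵀ * S) - lam • 1) *ᵥ z
        = (S - lam • 1) *ᵥ z + (Xm * R * Xmᵀ * Jᵀ * S) *ᵥ z := by
    intro z
    rw [show (S + Xm * R * Xmᵀ * Jᵀ * S) - lam • 1
          = (S - lam • 1) + Xm * R * Xmᵀ * Jᵀ * S from add_sub_right_comm S _ _,
      Matrix.add_mulVec]
  constructor
  · rw [hsplit, hchain0,
      hT (y 0) (H1 0 (Or.inl rfl)).2 (H2 0 (Or.inl rfl)).2, add_zero]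
  · intro k hk
    rw [hsplit, hchain k hk,
      hT (y (k+1)) (H1 (k+1) (Or.inr hk)).2 (H2 (k+1) (Or.inr hk)).2, add_zero]
end

section
/- Let Ŝ = S + XR₁XᵀJᵀS with R₁ = [[0, λ₁⁻¹(μ−λ₁)],[μ⁻¹(μ−λ₁), 0]] and X = [x₁ x₂] normalized so XᵀJX = J₂, Sx₁ = λ₁x₁, Sx₂ = λ₁⁻¹x₂. Then Ŝx₁ = μx₁ and Ŝx₂ = μ⁻¹x₂. -/
/-!
Write `G = XᵀJX`. Then `Xᵀ Jᵀ X = Gᵀ`, so for an eigenvector `v = X c` of `S` with eigenvalue `ν`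
the update acts as `Ŝ v = ν (v + X R Gᵀ c)`. With `G = J₂` the vectors `Gᵀ e₁ = e₂` and
`Gᵀ e₂ = -e₁` are sent by `R₁` to multiples of `e₁` and `e₂` again, and the coefficients of `R₁`
are chosen so that `λ₁ (1 + λ₁⁻¹ (μ - λ₁)) = μ` and `λ₁⁻¹ (1 - μ⁻¹ (μ - λ₁)) = μ⁻¹`.
-/

open Matrix

section

variable {ι m K : Type*} [Fintype ι] [Fintype m] [CommRing K]

theorem transpose_mul_transpose_mulVec_mulVec {X : Matrix ι m K} {J : Matrix ι ι K}
    {G : Matrix m m K} (hG : Xᵀ * J * X = G) (c : m → K) :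
    Xᵀ *ᵥ (Jᵀ *ᵥ (X *ᵥ c)) = Gᵀ *ᵥ c := by
  rw [← hG, transpose_mul, transpose_mul, transpose_transpose, mulVec_mulVec, mulVec_mulVec,
    Matrix.mul_assoc]

theorem add_mul_transpose_mul_mulVec_of_mulVec_eq_smul {X : Matrix ι m K} {J S : Matrix ι ι K}
    {G R : Matrix m m K} (hG : Xᵀ * J * X = G) {c : m → K} {v : ι → K} (hv : X *ᵥ c = v)
    {ν : K} (hSv : S *ᵥ v = ν • v) :
    (S + X * R * Xᵀ * Jᵀ * S) *ᵥ v = ν • (v + X *ᵥ (R *ᵥ (Gᵀ *ᵥ c))) := by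
  rw [add_mulVec, hSv, ← mulVec_mulVec, hSv, mulVec_smul, smul_add]
  simp only [← mulVec_mulVec]
  rw [← hv, transpose_mul_transpose_mulVec_mulVec hG]

end

theorem of_fin_two_cols_mulVec {ι K : Type*} [Fintype ι] [CommRing K] (x₁ x₂ : ι → K) (a b : K) :
    (of fun i (j : Fin 2) => if j = 0 then x₁ i else x₂ i) *ᵥ ![a, b] = a • x₁ + b • x₂ := by
  ext i
  simp [mulVec, dotProduct, Fin.sum_univ_two, mul_comm]

theorem eigenvectors_of_Shat_general (n : ℕ)
    (J : Matrix (Fin n ⊕ Fin n) (Fin n ⊕ Fin n) ℂ)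
    (S : Matrix (Fin n ⊕ Fin n) (Fin n ⊕ Fin n) ℂ)
    (lam1 mu : ℂ) (hlam1 : lam1 ≠ 0) (hmu : mu ≠ 0)
    (x1 x2 : Fin n ⊕ Fin n → ℂ)
    (h1 : S.mulVec x1 = lam1 • x1) (h2 : S.mulVec x2 = lam1⁻¹ • x2)
    (Xm : Matrix (Fin n ⊕ Fin n) (Fin 2) ℂ)
    (hXm : Xm = Matrix.of fun i j => if j = 0 then x1 i else x2 i)
    (hnorm : Xmᵀ * J * Xm = !![0, 1; -1, 0])
    (R1 : Matrix (Fin 2) (Fin 2) ℂ)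
    (hR1 : R1 = !![0, lam1⁻¹ * (mu - lam1); mu⁻¹ * (mu - lam1), 0]) :
    (S + Xm * R1 * Xmᵀ * Jᵀ * S).mulVec x1 = mu • x1 ∧
      (S + Xm * R1 * Xmᵀ * Jᵀ * S).mulVec x2 = mu⁻¹ • x2 := by
  have hX (a b : ℂ) : Xm *ᵥ ![a, b] = a • x1 + b • x2 := hXm ▸ of_fin_two_cols_mulVec x1 x2 a b
  have hx1 : Xm *ᵥ ![1, 0] = x1 := by simp [hX]
  have hx2 : Xm *ᵥ ![0, 1] = x2 := by simp [hX]
  constructor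
  · rw [add_mul_transpose_mul_mulVec_of_mulVec_eq_smul hnorm hx1 h1]
    have hR : R1 *ᵥ ((!![0, 1; -1, 0] : Matrix (Fin 2) (Fin 2) ℂ)ᵀ *ᵥ ![1, 0])
        = ![lam1⁻¹ * (mu - lam1), 0] := by
      ext i; fin_cases i <;> simp [hR1]
    rw [hR, hX, zero_smul, add_zero, smul_add, smul_smul, ← add_smul]
    congr 1
    field_simp
    ring
  · rw [add_mul_transpose_mul_mulVec_of_mulVec_eq_smul hnorm hx2 h2]
    have hR : R1 *ᵥ ((!![0, 1; -1, 0] : Matrix (Fin 2) (Fin 2) ℂ)ᵀ *ᵥ ![0, 1])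
        = ![0, -(mu⁻¹ * (mu - lam1))] := by
      ext i; fin_cases i <;> simp [hR1]
    rw [hR, hX, zero_smul, zero_add, smul_add, smul_smul, ← add_smul]
    congr 1
    field_simp
    ring

/-- For `Ŝ = S + X R₁ Xᵀ Jᵀ S` with `R₁ = [[0, λ₁⁻¹(μ-λ₁)],[μ⁻¹(μ-λ₁), 0]]`,
the eigenvectors `x₁, x₂` of `S` for `λ₁, λ₁⁻¹` satisfy `Ŝ x₁ = μ x₁` and
`Ŝ x₂ = μ⁻¹ x₂`. -/
theorem eigenvectors_of_Shat (n : ℕ)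
    (J : Matrix (Fin n ⊕ Fin n) (Fin n ⊕ Fin n) ℂ)
    (hJ : J = Matrix.fromBlocks 0 1 (-1) 0)
    (S : Matrix (Fin n ⊕ Fin n) (Fin n ⊕ Fin n) ℂ)
    (hS : Sᵀ * J * S = J)
    (lam1 mu : ℂ) (hlam1 : lam1 ≠ 0) (hmu : mu ≠ 0)
    (x1 x2 : Fin n ⊕ Fin n → ℂ)
    (h1 : S.mulVec x1 = lam1 • x1) (h2 : S.mulVec x2 = lam1⁻¹ • x2)
    (Xm : Matrix (Fin n ⊕ Fin n) (Fin 2) ℂ)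
    (hXm : Xm = Matrix.of fun i j => if j = 0 then x1 i else x2 i)
    (hnorm : Xmᵀ * J * Xm = !![0, 1; -1, 0])
    (R1 : Matrix (Fin 2) (Fin 2) ℂ)
    (hR1 : R1 = !![0, lam1⁻¹ * (mu - lam1); mu⁻¹ * (mu - lam1), 0]) :
    (S + Xm * R1 * Xmᵀ * Jᵀ * S).mulVec x1 = mu • x1 ∧
      (S + Xm * R1 * Xmᵀ * Jᵀ * S).mulVec x2 = mu⁻¹ • x2 :=
  eigenvectors_of_Shat_general n J S lam1 mu hlam1 hmu x1 x2 h1 h2 Xm hXm hnorm R1 hR1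
end

section
/- Pencil version of Rado's theorem: Let P(λ) = A − λB with B invertible have eigenvalues λ₁,…,λₙ, and let x₁,…,x_k satisfy Axⱼ = λⱼBxⱼ with X = [x₁ ⋯ x_k] of rank k. Then for any C ∈ M_{n×k}(ℂ), the pencil (A + BXCᵀ) − λB has eigenvalues μ₁,…,μ_k, λ_{k+1},…,λₙ, where μ₁,…,μ_k are the eigenvalues of diag(λ₁,…,λ_k) + CᵀX. -/
open Matrix Polynomial

private lemma eval_charpoly_aux {m : Type*} [Fintype m] [DecidableEq m]
    (M : Matrix m m ℂ) (z : ℂ) :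
    M.charpoly.eval z = (z • (1 : Matrix m m ℂ) - M).det := by
  rw [Matrix.charpoly, ← Polynomial.coe_evalRingHom, RingHom.map_det]
  congr 1
  ext i j
  by_cases h : i = j <;>
    simp [Matrix.charmatrix_apply, Matrix.map_apply, h, Matrix.one_apply,
      Matrix.smul_apply]

private lemma prod_filter_not_le {M : Type*} [CommMonoid M] {n k : ℕ} (hk : k ≤ n)
    (f : Fin n → M) :
    ∏ i ∈ Finset.univ.filter (fun i : Fin n => ¬ k ≤ (i : ℕ)), f i
      = ∏ j : Fin k, f (Fin.castLE hk j) := by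
  refine Finset.prod_bij' (fun i hi => (⟨(i : ℕ), by simpa using hi⟩ : Fin k))
    (fun j _ => Fin.castLE hk j) ?_ ?_ ?_ ?_ ?_ <;>
    simp [Fin.ext_iff, Fin.is_lt]

/-- **Pencil version of Rado's theorem.** Let `P(λ) = A - λB` with `B` invertible
have eigenvalues `λ₁, …, λₙ` (i.e. the eigenvalues of `B⁻¹A` with multiplicity),
and let the columns of `Xm` satisfy `A xⱼ = λⱼ B xⱼ` with `Xm` of rank `k`. Then
for any `C`, the pencil `(A + B Xm Cᵀ) - λB` has eigenvalues `μ₁, …, μ_k,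
λ_{k+1}, …, λₙ`, where the `μⱼ` are the eigenvalues of `diag(λ₁,…,λ_k) + Cᵀ Xm`. -/
theorem pencil_rado (n k : ℕ) (hk : k ≤ n)
    (A B : Matrix (Fin n) (Fin n) ℂ) (hB : IsUnit B.det)
    (lam : Fin n → ℂ)
    (hchar : (B⁻¹ * A).charpoly = ∏ i, (X - C (lam i)))
    (Xm : Matrix (Fin n) (Fin k) ℂ) (hrank : Xm.rank = k)
    (hev : ∀ j : Fin k,
      A.mulVec (fun i => Xm i j) = lam (Fin.castLE hk j) • B.mulVec (fun i => Xm i j))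
    (Cm : Matrix (Fin n) (Fin k) ℂ) :
    (B⁻¹ * (A + B * Xm * Cmᵀ)).charpoly
      = (Matrix.diagonal (fun j : Fin k => lam (Fin.castLE hk j)) + Cmᵀ * Xm).charpoly
        * ∏ i ∈ Finset.univ.filter (fun i : Fin n => k ≤ (i : ℕ)), (X - C (lam i)) := by
  set M := B⁻¹ * A with hM
  set D := Matrix.diagonal (fun j : Fin k => lam (Fin.castLE hk j)) with hD
  -- rewrite the LHS matrix
  have hN : B⁻¹ * (A + B * Xm * Cmᵀ) = M + Xm * Cmᵀ := by
    rw [Matrix.mul_add, ← Matrix.mul_assoc, ← Matrix.mul_assoc,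
      Matrix.nonsing_inv_mul B hB, Matrix.one_mul]
  rw [hN]
  -- the eigenvector relation in matrix form
  have hAX : A * Xm = B * (Xm * D) := by
    ext i j
    have := congrFun (hev j) i
    simp only [Matrix.mulVec, dotProduct, Pi.smul_apply, smul_eq_mul] at this
    simp [Matrix.mul_apply, hD, Matrix.diagonal, this, Finset.mul_sum, mul_comm,
      mul_left_comm]
  have hMX : M * Xm = Xm * D := by
    rw [hM, Matrix.mul_assoc, hAX, ← Matrix.mul_assoc, Matrix.nonsing_inv_mul B hB,
      Matrix.one_mul]
  -- the two halves of the product of linear factors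
  set Pk : ℂ[X] := ∏ i ∈ Finset.univ.filter (fun i : Fin n => ¬ k ≤ (i : ℕ)), (X - C (lam i))
    with hPk
  set Qk : ℂ[X] := ∏ i ∈ Finset.univ.filter (fun i : Fin n => k ≤ (i : ℕ)), (X - C (lam i))
    with hQk
  have hPkQk : Pk * Qk = M.charpoly := by
    rw [hchar, hPk, hQk, mul_comm,
      Finset.prod_filter_mul_prod_filter_not Finset.univ (fun i : Fin n => k ≤ (i : ℕ))]
  have hPk_monic : Pk.Monic :=
    monic_prod_of_monic _ _ (fun i _ => monic_X_sub_C (lam i))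
  -- main identity, proved by evaluating at cofinitely many points
  have main : (M + Xm * Cmᵀ).charpoly * Pk = (D + Cmᵀ * Xm).charpoly * M.charpoly := by
    apply eq_of_infinite_eval_eq
    apply Set.Infinite.mono (s := (Set.range lam)ᶜ)
    · intro z hz
      have hz' : ∀ i, z - lam i ≠ 0 := by
        intro i h
        exact hz ⟨i, by linear_combination -h⟩
      -- the resolvents
      set R : Matrix (Fin n) (Fin n) ℂ := z • 1 - M with hR
      set E : Matrix (Fin k) (Fin k) ℂ := z • 1 - D with hE
      have hEdiag : E = Matrix.diagonal (fun j : Fin k => z - lam (Fin.castLE hk j)) := by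
        rw [hE, hD]
        ext i j
        by_cases h : i = j <;>
          simp [Matrix.diagonal, Matrix.one_apply, Matrix.smul_apply, h]
      have hdetR : R.det = ∏ i, (z - lam i) := by
        rw [hR, ← eval_charpoly_aux, hchar]
        simp [eval_prod]
      have hdetE : E.det = ∏ j : Fin k, (z - lam (Fin.castLE hk j)) := by
        rw [hEdiag, Matrix.det_diagonal]
      have hRunit : IsUnit R.det := by
        rw [hdetR]; exact IsUnit.mk0 _ (Finset.prod_ne_zero_iff.2 fun i _ => hz' i)
      have hEunit : IsUnit E.det := by
        rw [hdetE]; exact IsUnit.mk0 _ (Finset.prod_ne_zero_iff.2 fun j _ => hz' _)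
      -- intertwining of resolvents
      have hRX : R * Xm = Xm * E := by
        rw [hR, hE, Matrix.sub_mul, Matrix.mul_sub, hMX, Matrix.smul_mul, Matrix.mul_smul,
          Matrix.one_mul, Matrix.mul_one]
      have hRinvX : R⁻¹ * Xm = Xm * E⁻¹ := by
        have h1 : Xm = R⁻¹ * (Xm * E) := by
          rw [← hRX, ← Matrix.mul_assoc, Matrix.nonsing_inv_mul R hRunit, Matrix.one_mul]
        calc R⁻¹ * Xm = R⁻¹ * (Xm * E) * E⁻¹ := by
              rw [Matrix.mul_assoc, Matrix.mul_assoc, Matrix.mul_nonsing_inv E hEunit,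
                Matrix.mul_one]
          _ = Xm * E⁻¹ := by rw [← h1]
      -- the determinant computation
      simp only [Set.mem_setOf_eq, eval_mul]
      have hPkeval : Pk.eval z = E.det := by
        rw [hPk, hdetE]
        simp only [eval_prod, eval_sub, eval_X, eval_C]
        exact prod_filter_not_le hk _
      have lhs1 : z • (1 : Matrix (Fin n) (Fin n) ℂ) - (M + Xm * Cmᵀ) = R - Xm * Cmᵀ := by
        rw [hR, sub_add_eq_sub_sub]
      have rhs1 : z • (1 : Matrix (Fin k) (Fin k) ℂ) - (D + Cmᵀ * Xm) = E - Cmᵀ * Xm := by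
        rw [hE, sub_add_eq_sub_sub]
      have h1 : (M + Xm * Cmᵀ).charpoly.eval z = (R - Xm * Cmᵀ).det := by
        rw [eval_charpoly_aux, lhs1]
      have h2 : (D + Cmᵀ * Xm).charpoly.eval z = (E - Cmᵀ * Xm).det := by
        rw [eval_charpoly_aux, rhs1]
      have h3 : M.charpoly.eval z = R.det := by
        rw [eval_charpoly_aux, ← hR]
      rw [h1, h2, h3, hPkeval]
      have step1 : (R - Xm * Cmᵀ).det = R.det * (1 - Cmᵀ * (Xm * E⁻¹)).det := by
        have : R - Xm * Cmᵀ = R * (1 - R⁻¹ * Xm * Cmᵀ) := by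
          rw [Matrix.mul_sub, Matrix.mul_one, ← Matrix.mul_assoc, ← Matrix.mul_assoc,
            Matrix.mul_nonsing_inv R hRunit, Matrix.one_mul]
        rw [this, Matrix.det_mul, Matrix.det_one_sub_mul_comm (R⁻¹ * Xm) Cmᵀ, hRinvX]
      have step2 : (E - Cmᵀ * Xm).det = (1 - Cmᵀ * (Xm * E⁻¹)).det * E.det := by
        have : E - Cmᵀ * Xm = (1 - Cmᵀ * Xm * E⁻¹) * E := by
          rw [Matrix.sub_mul, Matrix.one_mul, Matrix.mul_assoc,
            Matrix.nonsing_inv_mul E hEunit, Matrix.mul_one]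
        rw [this, Matrix.det_mul, Matrix.mul_assoc]
      rw [step1, step2]
      ring
    · apply Set.Finite.infinite_compl
      exact Set.finite_range lam
  -- cancel the monic factor `Pk`
  have hPk_ne : Pk ≠ 0 := hPk_monic.ne_zero
  apply mul_right_cancel₀ hPk_ne
  rw [main, mul_assoc, mul_comm Qk Pk, hPkQk]
end
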